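/- arXiv:2207.13723 — 7 statements merged into one kernel-verified Lean document; each statement's English description precedes it below -/
import Mathlib

section
/- For all integers n ≥ 1 and 0 ≤ k ≤ n, the ratio of central-type binomial coefficients satisfies C(2n, 2k) / C(n, k) ≤ 2^{n·H_b(k/n)}, where H_b(x) = -x·log₂(x) - (1-x)·log₂(1-x) is the binary entropy function (with H_b(0) = H_b(1) = 0). -/
/-- The binary entropy function `H_b(x) = -x·log₂ x - (1-x)·log₂(1-x)`.
Note `Real.logb 2 0 = 0`, so `H_b 0 = H_b 1 = 0` automatically. -/
noncomputable def binEnt (x : ℝ) : ℝ :=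
  -x * Real.logb 2 x - (1 - x) * Real.logb 2 (1 - x)

private lemma choose_step (n a c : ℕ) (h : a ≤ c) :
    n.choose a * n.choose (c + 1) ≤ n.choose (a + 1) * n.choose c := by
  have h1 := Nat.choose_succ_right_eq n a
  have h2 := Nat.choose_succ_right_eq n c
  apply Nat.le_of_mul_le_mul_right _ (show 0 < (a + 1) * (c + 1) by positivity)
  calc n.choose a * n.choose (c + 1) * ((a + 1) * (c + 1))
      = (n.choose (c + 1) * (c + 1)) * (n.choose a * (a + 1)) := by ring
    _ = (n.choose c * (n - c)) * (n.choose a * (a + 1)) := by rw [h2]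
    _ = n.choose c * n.choose a * ((n - c) * (a + 1)) := by ring
    _ ≤ n.choose c * n.choose a * ((n - a) * (c + 1)) :=
        Nat.mul_le_mul_left _ (Nat.mul_le_mul (Nat.sub_le_sub_left h n) (by omega))
    _ = (n.choose a * (n - a)) * (n.choose c * (c + 1)) := by ring
    _ = (n.choose (a + 1) * (a + 1)) * (n.choose c * (c + 1)) := by rw [h1]
    _ = n.choose (a + 1) * n.choose c * ((a + 1) * (c + 1)) := by ring

private lemma choose_logconc_aux (n : ℕ) : ∀ d a : ℕ,
    n.choose a * n.choose (a + 2 * d) ≤ n.choose (a + d) ^ 2 := by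
  intro d
  induction d with
  | zero => intro a; simp [sq]
  | succ d ih =>
    intro a
    have h1 : n.choose a * n.choose (a + 2 * (d + 1)) ≤
        n.choose (a + 1) * n.choose (a + 2 * d + 1) := by
      have e : a + 2 * (d + 1) = (a + 2 * d + 1) + 1 := by omega
      rw [e]
      exact choose_step n a (a + 2 * d + 1) (by omega)
    have h2 := ih (a + 1)
    calc n.choose a * n.choose (a + 2 * (d + 1))
        ≤ n.choose (a + 1) * n.choose (a + 2 * d + 1) := h1
      _ = n.choose (a + 1) * n.choose ((a + 1) + 2 * d) := by ring_nf
      _ ≤ n.choose ((a + 1) + d) ^ 2 := h2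
      _ = n.choose (a + (d + 1)) ^ 2 := by ring_nf

private lemma choose_logconc (n k a b : ℕ) (hab : a + b = 2 * k) :
    n.choose a * n.choose b ≤ n.choose k ^ 2 := by
  rcases le_total a k with h | h
  · have hb : b = a + 2 * (k - a) := by omega
    have hk' : a + (k - a) = k := by omega
    have := choose_logconc_aux n (k - a) a
    rwa [hk', ← hb] at this
  · have ha : a = b + 2 * (k - b) := by omega
    have hk' : b + (k - b) = k := by omega
    have := choose_logconc_aux n (k - b) b
    rw [mul_comm]
    rwa [hk', ← ha] at this

private lemma binom_sum_le_one (n m : ℕ) (p q : ℝ) (hp : 0 ≤ p) (hq : 0 ≤ q)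
    (hpq : p + q = 1) :
    ∑ a ∈ Finset.range (m + 1), (n.choose a : ℝ) * p ^ a * q ^ (n - a) ≤ 1 := by
  have h1 : ∑ a ∈ Finset.range (n + 1), (n.choose a : ℝ) * p ^ a * q ^ (n - a) = 1 := by
    have h := add_pow p q n
    rw [hpq, one_pow] at h
    exact (Finset.sum_congr rfl fun a _ => by ring : _ = ∑ m ∈ Finset.range (n + 1), p ^ m * q ^ (n - m) * (n.choose m : ℝ)).trans h.symm
  rcases le_or_gt m n with h | h
  · calc ∑ a ∈ Finset.range (m + 1), (n.choose a : ℝ) * p ^ a * q ^ (n - a)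
        ≤ ∑ a ∈ Finset.range (n + 1), (n.choose a : ℝ) * p ^ a * q ^ (n - a) := by
          apply Finset.sum_le_sum_of_subset_of_nonneg
          · exact Finset.range_subset_range.2 (by omega)
          · intro i _ _; positivity
      _ = 1 := h1
  · have e : ∑ a ∈ Finset.range (m + 1), (n.choose a : ℝ) * p ^ a * q ^ (n - a)
        = ∑ a ∈ Finset.range (n + 1), (n.choose a : ℝ) * p ^ a * q ^ (n - a) := by
      symm
      apply Finset.sum_subset (Finset.range_subset_range.2 (by omega))
      intro x _ hx
      have : n < x := by simpa using hx
      simp [Nat.choose_eq_zero_of_lt this]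
    rw [e, h1]


private noncomputable def Fterm (n : ℕ) (p q : ℝ) (j : ℕ) : ℝ :=
  (n.choose j : ℝ) * p ^ j * q ^ (n - j)

private lemma Fterm_nonneg (n : ℕ) (p q : ℝ) (hp : 0 ≤ p) (hq : 0 ≤ q) (j : ℕ) :
    0 ≤ Fterm n p q j := by unfold Fterm; positivity

private lemma main_ineq (n k : ℕ) (hkn : k ≤ n) (p q : ℝ) (hp : 0 ≤ p) (hq : 0 ≤ q)
    (hpq : p + q = 1) :
    ((2 * n).choose (2 * k) : ℝ) * (p ^ k * q ^ (n - k)) ≤ (n.choose k : ℝ) := by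
  have hV : ((2 * n).choose (2 * k) : ℝ)
      = ∑ a ∈ Finset.range (2 * k + 1), (n.choose a : ℝ) * (n.choose (2 * k - a) : ℝ) := by
    have h := Nat.add_choose_eq n n (2 * k)
    rw [Finset.Nat.sum_antidiagonal_eq_sum_range_succ_mk] at h
    rw [two_mul n, h]
    push_cast
    rfl
  have hterm : ∀ a ∈ Finset.range (2 * k + 1),
      (n.choose a : ℝ) * (n.choose (2 * k - a) : ℝ) * (p ^ k * q ^ (n - k)) ≤
        (n.choose k : ℝ) * (Real.sqrt (Fterm n p q a) * Real.sqrt (Fterm n p q (2 * k - a))) := by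
    intro a ha
    have ha' : a ≤ 2 * k := by
      have := Finset.mem_range.mp ha; omega
    by_cases h1 : n < a
    · rw [Nat.choose_eq_zero_of_lt h1]
      push_cast
      rw [zero_mul, zero_mul]
      positivity
    by_cases h2 : n < 2 * k - a
    · rw [Nat.choose_eq_zero_of_lt h2]
      push_cast
      rw [mul_zero, zero_mul]
      positivity
    push_neg at h1 h2
    have hsq : p ^ k * q ^ (n - k)
        = Real.sqrt (p ^ a * q ^ (n - a)) * Real.sqrt (p ^ (2 * k - a) * q ^ (n - (2 * k - a))) := by
      rw [← Real.sqrt_mul (by positivity)]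
      have e : p ^ a * q ^ (n - a) * (p ^ (2 * k - a) * q ^ (n - (2 * k - a)))
          = (p ^ k * q ^ (n - k)) ^ 2 := by
        have e1 : a + (2 * k - a) = k + k := by omega
        have e2 : (n - a) + (n - (2 * k - a)) = (n - k) + (n - k) := by omega
        calc p ^ a * q ^ (n - a) * (p ^ (2 * k - a) * q ^ (n - (2 * k - a)))
            = p ^ (a + (2 * k - a)) * q ^ ((n - a) + (n - (2 * k - a))) := by
              rw [pow_add, pow_add]; ring
          _ = p ^ (k + k) * q ^ ((n - k) + (n - k)) := by rw [e1, e2]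
          _ = (p ^ k * q ^ (n - k)) ^ 2 := by rw [pow_add, pow_add]; ring
      rw [e, Real.sqrt_sq (by positivity)]
    have hlc : (n.choose a : ℝ) * (n.choose (2 * k - a) : ℝ) ≤
        (n.choose k : ℝ) * Real.sqrt ((n.choose a : ℝ) * (n.choose (2 * k - a) : ℝ)) := by
      have h := choose_logconc n k a (2 * k - a) (by omega)
      have h' : (n.choose a : ℝ) * (n.choose (2 * k - a) : ℝ) ≤ (n.choose k : ℝ) ^ 2 := by
        exact_mod_cast Nat.cast_le.mpr h
      have hs : Real.sqrt ((n.choose a : ℝ) * (n.choose (2 * k - a) : ℝ)) ≤ (n.choose k : ℝ) := by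
        rw [show ((n.choose k : ℝ)) = Real.sqrt ((n.choose k : ℝ) ^ 2) from
          (Real.sqrt_sq (by positivity)).symm]
        exact Real.sqrt_le_sqrt h'
      calc (n.choose a : ℝ) * (n.choose (2 * k - a) : ℝ)
          = Real.sqrt ((n.choose a : ℝ) * (n.choose (2 * k - a) : ℝ)) *
              Real.sqrt ((n.choose a : ℝ) * (n.choose (2 * k - a) : ℝ)) :=
            (Real.mul_self_sqrt (by positivity)).symm
        _ ≤ (n.choose k : ℝ) * Real.sqrt ((n.choose a : ℝ) * (n.choose (2 * k - a) : ℝ)) :=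
            mul_le_mul_of_nonneg_right hs (Real.sqrt_nonneg _)
    calc (n.choose a : ℝ) * (n.choose (2 * k - a) : ℝ) * (p ^ k * q ^ (n - k))
        ≤ ((n.choose k : ℝ) * Real.sqrt ((n.choose a : ℝ) * (n.choose (2 * k - a) : ℝ))) *
            (Real.sqrt (p ^ a * q ^ (n - a)) *
              Real.sqrt (p ^ (2 * k - a) * q ^ (n - (2 * k - a)))) := by
          rw [← hsq]
          exact mul_le_mul_of_nonneg_right hlc (by positivity)
      _ = (n.choose k : ℝ) * (Real.sqrt (Fterm n p q a) * Real.sqrt (Fterm n p q (2 * k - a))) := by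
          have sA : Real.sqrt (Fterm n p q a)
              = Real.sqrt (n.choose a : ℝ) * Real.sqrt (p ^ a * q ^ (n - a)) := by
            unfold Fterm
            rw [mul_assoc, Real.sqrt_mul (Nat.cast_nonneg _)]
          have sB : Real.sqrt (Fterm n p q (2 * k - a))
              = Real.sqrt (n.choose (2 * k - a) : ℝ) *
                  Real.sqrt (p ^ (2 * k - a) * q ^ (n - (2 * k - a))) := by
            unfold Fterm
            rw [mul_assoc, Real.sqrt_mul (Nat.cast_nonneg _)]
          have sAB : Real.sqrt ((n.choose a : ℝ) * (n.choose (2 * k - a) : ℝ))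
              = Real.sqrt (n.choose a : ℝ) * Real.sqrt (n.choose (2 * k - a) : ℝ) :=
            Real.sqrt_mul (Nat.cast_nonneg _) _
          rw [sA, sB, sAB]
          ring
  -- Cauchy–Schwarz step
  have hF1 : ∑ a ∈ Finset.range (2 * k + 1), Fterm n p q a ≤ 1 :=
    binom_sum_le_one n (2 * k) p q hp hq hpq
  have hF2 : ∑ a ∈ Finset.range (2 * k + 1), Fterm n p q (2 * k - a) ≤ 1 := by
    have h := Finset.sum_range_reflect (Fterm n p q) (2 * k + 1)
    have e : ∑ a ∈ Finset.range (2 * k + 1), Fterm n p q (2 * k - a)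
        = ∑ a ∈ Finset.range (2 * k + 1), Fterm n p q (2 * k + 1 - 1 - a) := by
      apply Finset.sum_congr rfl
      intro a ha
      have e2 : 2 * k - a = 2 * k + 1 - 1 - a := by omega
      rw [e2]
    rw [e, h]
    exact hF1
  have hCS : ∑ a ∈ Finset.range (2 * k + 1),
      Real.sqrt (Fterm n p q a) * Real.sqrt (Fterm n p q (2 * k - a)) ≤ 1 := by
    have h := Finset.sum_mul_sq_le_sq_mul_sq (Finset.range (2 * k + 1))
      (fun a => Real.sqrt (Fterm n p q a)) (fun a => Real.sqrt (Fterm n p q (2 * k - a)))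
    have e1 : ∑ a ∈ Finset.range (2 * k + 1), Real.sqrt (Fterm n p q a) ^ 2
        = ∑ a ∈ Finset.range (2 * k + 1), Fterm n p q a :=
      Finset.sum_congr rfl fun a _ => Real.sq_sqrt (Fterm_nonneg n p q hp hq a)
    have e2 : ∑ a ∈ Finset.range (2 * k + 1), Real.sqrt (Fterm n p q (2 * k - a)) ^ 2
        = ∑ a ∈ Finset.range (2 * k + 1), Fterm n p q (2 * k - a) :=
      Finset.sum_congr rfl fun a _ => Real.sq_sqrt (Fterm_nonneg n p q hp hq _)
    rw [e1, e2] at h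
    have hsum_nonneg : (0:ℝ) ≤ ∑ a ∈ Finset.range (2 * k + 1),
        Real.sqrt (Fterm n p q a) * Real.sqrt (Fterm n p q (2 * k - a)) :=
      Finset.sum_nonneg fun a _ => mul_nonneg (Real.sqrt_nonneg _) (Real.sqrt_nonneg _)
    have hsq : (∑ a ∈ Finset.range (2 * k + 1),
        Real.sqrt (Fterm n p q a) * Real.sqrt (Fterm n p q (2 * k - a))) ^ 2 ≤ 1 := by
      calc _ ≤ _ := h
        _ ≤ 1 * 1 := by
            apply mul_le_mul hF1 hF2 ?_ (by linarith)
            exact Finset.sum_nonneg fun a _ => Fterm_nonneg n p q hp hq _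
        _ = 1 := one_mul 1
    nlinarith [hsum_nonneg]
  calc ((2 * n).choose (2 * k) : ℝ) * (p ^ k * q ^ (n - k))
      = ∑ a ∈ Finset.range (2 * k + 1),
          (n.choose a : ℝ) * (n.choose (2 * k - a) : ℝ) * (p ^ k * q ^ (n - k)) := by
        rw [hV, Finset.sum_mul]
    _ ≤ ∑ a ∈ Finset.range (2 * k + 1), (n.choose k : ℝ) *
          (Real.sqrt (Fterm n p q a) * Real.sqrt (Fterm n p q (2 * k - a))) :=
        Finset.sum_le_sum hterm
    _ = (n.choose k : ℝ) * ∑ a ∈ Finset.range (2 * k + 1),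
          Real.sqrt (Fterm n p q a) * Real.sqrt (Fterm n p q (2 * k - a)) := by
        rw [Finset.mul_sum]
    _ ≤ (n.choose k : ℝ) * 1 :=
        mul_le_mul_of_nonneg_left hCS (Nat.cast_nonneg _)
    _ = (n.choose k : ℝ) := mul_one _

theorem choose_ratio_le_two_pow_entropy (n k : ℕ) (hn : 1 ≤ n) (hk : k ≤ n) :
    ((2 * n).choose (2 * k) : ℝ) / (n.choose k : ℝ) ≤
      (2 : ℝ) ^ ((n : ℝ) * binEnt ((k : ℝ) / (n : ℝ))) := by
  have hn0 : (n : ℝ) ≠ 0 := by positivity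
  rcases Nat.eq_zero_or_pos k with rfl | hk0
  · simp [binEnt]
  rcases eq_or_lt_of_le hk with rfl | hkn
  · have : (k : ℝ) / k = 1 := div_self (by positivity)
    simp [this, binEnt]
  -- now 0 < k < n
  set p : ℝ := (k : ℝ) / n with hp_def
  have hp : 0 < p := by positivity
  have hq' : (1 : ℝ) - p = ((n - k : ℕ) : ℝ) / n := by
    rw [Nat.cast_sub hk, hp_def]
    field_simp
  have hq : 0 < 1 - p := by
    rw [hq']
    have : 0 < n - k := by omega
    positivity
  set q : ℝ := 1 - p with hq_def
  have hpq : p + q = 1 := by ring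
  have hnp : (n : ℝ) * p = k := by rw [hp_def]; field_simp
  have hnq : (n : ℝ) * q = (n : ℝ) - k := by rw [hq_def]; linear_combination -hnp
  have hp1 : p < 1 := by linarith
  -- the RHS equals (p^k * q^(n-k))⁻¹
  have hrhs : (2 : ℝ) ^ ((n : ℝ) * binEnt p) = (p ^ k * q ^ (n - k))⁻¹ := by
    have hexp : (n : ℝ) * binEnt p = Real.logb 2 ((p ^ k * q ^ (n - k))⁻¹) := by
      rw [Real.logb_inv, Real.logb_mul (by positivity) (by positivity),
        Real.logb_pow, Real.logb_pow]
      unfold binEnt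
      have e : ((n - k : ℕ) : ℝ) = (n : ℝ) - k := by rw [Nat.cast_sub hk]
      rw [e, ← hq_def]
      linear_combination (-(Real.logb 2 p)) * hnp + (-(Real.logb 2 q)) * hnq
    rw [hexp, Real.rpow_logb (by norm_num) (by norm_num) (by positivity)]
  rw [hrhs]
  have hCpos : (0 : ℝ) < n.choose k := by
    exact_mod_cast Nat.choose_pos hk
  rw [div_le_iff₀ hCpos, inv_mul_eq_div,
    le_div_iff₀ (show (0:ℝ) < p ^ k * q ^ (n - k) by positivity)]
  exact main_ineq n k hk p q hp.le hq.le hpq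
end

section
/- For all integers n ≥ 1 and 0 ≤ k ≤ n, one has C(2n, 2k) ≤ 2^n · C(n, k). -/
/-- `df m = (2m-1)!!`, the product of the first `m` odd numbers. -/
private def df : ℕ → ℕ
  | 0 => 1
  | (m+1) => (2*m+1) * df m

private lemma df_pos (m : ℕ) : 0 < df m := by
  induction m with
  | zero => simp [df]
  | succ m ih =>
    unfold df
    positivity

private lemma fact_two_mul (m : ℕ) : (2*m).factorial = 2^m * m.factorial * df m := by
  induction m with
  | zero => simp [df]
  | succ m ih =>
    have h : 2 * (m+1) = (2*m+1) + 1 := by ring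
    rw [h, Nat.factorial_succ, Nat.factorial_succ, Nat.factorial_succ, ih, df, pow_succ]
    ring

private lemma df_add_le_aux : ∀ (N a b : ℕ), a + b ≤ N → a ≤ b →
    df (a+b) ≤ 2^(a+b) * (df a * df b) := by
  intro N
  induction N with
  | zero =>
    intro a b h _
    have ha : a = 0 := by omega
    have hb : b = 0 := by omega
    subst ha; subst hb; simp [df]
  | succ N ih =>
    intro a b h hab
    rcases lt_or_eq_of_le hab with hlt | heq
    · -- a < b, write b = c+1 with a ≤ c
      obtain ⟨c, rfl⟩ : ∃ c, b = c + 1 := ⟨b - 1, by omega⟩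
      have hac : a ≤ c := by omega
      have hsum : a + c ≤ N := by omega
      have ihc := ih a c hsum hac
      have h1 : df (a + (c+1)) = (2*(a+c)+1) * df (a+c) := by
        have : a + (c+1) = (a+c) + 1 := by ring
        rw [this]; rfl
      calc df (a + (c+1)) = (2*(a+c)+1) * df (a+c) := h1
        _ ≤ (2*(a+c)+1) * (2^(a+c) * (df a * df c)) := Nat.mul_le_mul_left _ ihc
        _ ≤ (2*(2*c+1)) * (2^(a+c) * (df a * df c)) := by
            apply Nat.mul_le_mul_right
            omega
        _ = 2^(a+c+1) * (df a * ((2*c+1) * df c)) := by rw [pow_succ]; ring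
        _ = 2^(a+(c+1)) * (df a * df (c+1)) := by
            have : a + c + 1 = a + (c+1) := by ring
            rw [this]; rfl
    · subst heq
      rcases Nat.eq_zero_or_pos a with rfl | hpos
      · simp [df]
      obtain ⟨d, rfl⟩ : ∃ d, a = d + 1 := ⟨a - 1, by omega⟩
      have hsum : d + d ≤ N := by omega
      have ihd := ih d d hsum le_rfl
      have h1 : df ((d+1) + (d+1)) = (4*d+3) * ((4*d+1) * df (d+d)) := by
        have e1 : (d+1) + (d+1) = (d+d+1) + 1 := by ring
        rw [e1]
        show (2*(d+d+1)+1) * df (d+d+1) = _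
        have e2 : df (d+d+1) = (2*(d+d)+1) * df (d+d) := rfl
        rw [e2]
        ring_nf
      calc df ((d+1) + (d+1)) = (4*d+3) * ((4*d+1) * df (d+d)) := h1
        _ = ((4*d+3) * (4*d+1)) * df (d+d) := by ring
        _ ≤ ((4*d+3) * (4*d+1)) * (2^(d+d) * (df d * df d)) :=
            Nat.mul_le_mul_left _ ihd
        _ ≤ (4 * ((2*d+1) * (2*d+1))) * (2^(d+d) * (df d * df d)) := by
            apply Nat.mul_le_mul_right
            nlinarith
        _ = 2^(d+d+2) * (((2*d+1) * df d) * ((2*d+1) * df d)) := by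
            rw [pow_add]
            ring
        _ = 2^((d+1)+(d+1)) * (df (d+1) * df (d+1)) := by
            have : d + d + 2 = (d+1)+(d+1) := by ring
            rw [this]; rfl

private lemma df_add_le (a b : ℕ) : df (a+b) ≤ 2^(a+b) * (df a * df b) := by
  rcases le_total a b with h | h
  · exact df_add_le_aux (a+b) a b le_rfl h
  · have := df_add_le_aux (a+b) b a (by omega) h
    calc df (a+b) = df (b+a) := by rw [Nat.add_comm]
      _ ≤ 2^(b+a) * (df b * df a) := this
      _ = 2^(a+b) * (df a * df b) := by rw [Nat.add_comm b a]; ring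

theorem choose_two_mul_le (n k : ℕ) (hn : 1 ≤ n) (hk : k ≤ n) :
    (2 * n).choose (2 * k) ≤ 2 ^ n * n.choose k := by
  have h2k : 2 * k ≤ 2 * n := by omega
  have hid := Nat.choose_mul_factorial_mul_factorial h2k
  have hsub : 2 * n - 2 * k = 2 * (n - k) := by omega
  rw [hsub, fact_two_mul k, fact_two_mul (n-k), fact_two_mul n] at hid
  -- hid : C(2n,2k) * (2^k * k! * df k) * (2^(n-k) * (n-k)! * df (n-k)) = 2^n * n! * df n
  have hkk : k + (n - k) = n := by omega
  have hdf : df n ≤ 2^n * (df k * df (n-k)) := by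
    have := df_add_le k (n-k)
    rwa [hkk] at this
  have hpow : 2^k * 2^(n-k) = 2^n := by rw [← pow_add, hkk]
  set M := k.factorial * (n-k).factorial * (df k * df (n-k)) with hM
  have hMpos : 0 < M := by
    apply Nat.mul_pos
    · exact Nat.mul_pos k.factorial_pos (n-k).factorial_pos
    · exact Nat.mul_pos (df_pos k) (df_pos (n-k))
  have hid2 : (2*n).choose (2*k) * (2^n * M) = 2^n * n.factorial * df n := by
    rw [← hid, ← hpow, hM]; ring
  have hfac : n.choose k * (k.factorial * (n-k).factorial) = n.factorial := by
    have := Nat.choose_mul_factorial_mul_factorial hk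
    rw [← this]; ring
  have key : (2*n).choose (2*k) * (2^n * M) ≤ (2^n * n.choose k) * (2^n * M) := by
    rw [hid2]
    calc 2^n * n.factorial * df n
        ≤ 2^n * n.factorial * (2^n * (df k * df (n-k))) :=
          Nat.mul_le_mul_left _ hdf
      _ = (2^n * n.choose k) * (2^n * M) := by
          rw [hM, ← hfac]; ring
  exact Nat.le_of_mul_le_mul_right key (Nat.mul_pos (by positivity) hMpos)
end

section
/- Let k₁, k₂, k₃, k₄ be positive integers with k₁ + k₂ + k₃ + k₄ = n. Then the ratio of the square of the multinomial coefficient to the doubled multinomial coefficient satisfies (n! / (k₁!·k₂!·k₃!·k₄!))² / ((2n)! / ((2k₁)!·(2k₂)!·(2k₃)!·(2k₄)!)) ≤ √(n / (k₁·k₂·k₃·k₄)). -/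
/-!
Writing `c k` for the central binomial coefficient `(2k choose k) = (2k)! / k!²`, the ratio on
the left equals `c k₁ * c k₂ * c k₃ * c k₄ / c n`. The Wallis-type bounds
`16^k / (4k) ≤ c k ^ 2 ≤ 16^k / (2k + 1)`, each proved by induction from
`(k + 1) * c (k + 1) = 2 * (2k + 1) * c k`, then give
`(∏ c kᵢ)² * ∏ kᵢ ≤ 16^n / 16 ≤ n * c n ^ 2 / 4`.
-/

open Nat

theorem Nat.centralBinom_sq_mul_two_mul_add_one_le (k : ℕ) :
    centralBinom k ^ 2 * (2 * k + 1) ≤ 16 ^ k := by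
  induction k with
  | zero => simp
  | succ k ih =>
    refine Nat.le_of_mul_le_mul_left (c := (k + 1) ^ 2) ?_ (by positivity)
    calc (k + 1) ^ 2 * (centralBinom (k + 1) ^ 2 * (2 * (k + 1) + 1))
        = ((k + 1) * centralBinom (k + 1)) ^ 2 * (2 * k + 3) := by ring
      _ = (4 * (2 * k + 1) * (2 * k + 3)) * (centralBinom k ^ 2 * (2 * k + 1)) := by
          rw [succ_mul_centralBinom_succ]; ring
      _ ≤ 16 * (k + 1) ^ 2 * 16 ^ k := Nat.mul_le_mul (by nlinarith) ih
      _ = (k + 1) ^ 2 * 16 ^ (k + 1) := by ring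

theorem Nat.sixteen_pow_le_centralBinom_sq_mul_four_mul {k : ℕ} (hk : 0 < k) :
    16 ^ k ≤ centralBinom k ^ 2 * (4 * k) := by
  induction k, hk using Nat.le_induction with
  | base => decide
  | succ k _ ih =>
    refine Nat.le_of_mul_le_mul_left (c := (k + 1) ^ 2) ?_ (by positivity)
    calc (k + 1) ^ 2 * 16 ^ (k + 1) = 16 * (k + 1) ^ 2 * 16 ^ k := by ring
      _ ≤ 16 * (k + 1) ^ 2 * (centralBinom k ^ 2 * (4 * k)) := by gcongr
      _ = 4 * k * (k + 1) * (16 * (k + 1) * centralBinom k ^ 2) := by ring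
      _ ≤ (2 * k + 1) ^ 2 * (16 * (k + 1) * centralBinom k ^ 2) := by gcongr; nlinarith
      _ = ((k + 1) * centralBinom (k + 1)) ^ 2 * (4 * (k + 1)) := by
          rw [succ_mul_centralBinom_succ]; ring
      _ = (k + 1) ^ 2 * (centralBinom (k + 1) ^ 2 * (4 * (k + 1))) := by ring

theorem Nat.centralBinom_mul_factorial_sq (k : ℕ) : centralBinom k * k ! ^ 2 = (2 * k)! := by
  rw [centralBinom_eq_two_mul_choose, sq, ← mul_assoc]
  simpa [two_mul] using choose_mul_factorial_mul_factorial (le_add_right k k)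

theorem Nat.centralBinom_sq_mul_two_mul_le (k : ℕ) : centralBinom k ^ 2 * (2 * k) ≤ 16 ^ k :=
  (Nat.mul_le_mul_left _ (le_succ _)).trans (centralBinom_sq_mul_two_mul_add_one_le k)

theorem Finset.prod_centralBinom_sq_mul_two_mul_le {ι : Type*} (s : Finset ι) (k : ι → ℕ) :
    ∏ i ∈ s, centralBinom (k i) ^ 2 * (2 * k i) ≤ 16 ^ ∑ i ∈ s, k i := by
  rw [← Finset.prod_pow_eq_pow_sum]
  exact Finset.prod_le_prod' fun i _ => centralBinom_sq_mul_two_mul_le (k i)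

theorem four_mul_centralBinom_prod_sq_mul_prod_le {n k₁ k₂ k₃ k₄ : ℕ} (hn : 0 < n)
    (hsum : k₁ + k₂ + k₃ + k₄ = n) :
    4 * ((centralBinom k₁ * centralBinom k₂ * centralBinom k₃ * centralBinom k₄) ^ 2 *
      (k₁ * k₂ * k₃ * k₄)) ≤ n * centralBinom n ^ 2 := by
  refine Nat.le_of_mul_le_mul_left (c := 4) ?_ (by norm_num)
  calc 4 * (4 * ((centralBinom k₁ * centralBinom k₂ * centralBinom k₃ * centralBinom k₄) ^ 2 *
        (k₁ * k₂ * k₃ * k₄)))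
      = centralBinom k₁ ^ 2 * (2 * k₁) * (centralBinom k₂ ^ 2 * (2 * k₂)) *
          (centralBinom k₃ ^ 2 * (2 * k₃)) * (centralBinom k₄ ^ 2 * (2 * k₄)) := by ring
    _ ≤ 16 ^ n := by
        simpa [Fin.prod_univ_four, Fin.sum_univ_four, hsum] using
          Finset.prod_centralBinom_sq_mul_two_mul_le Finset.univ ![k₁, k₂, k₃, k₄]
    _ ≤ centralBinom n ^ 2 * (4 * n) := sixteen_pow_le_centralBinom_sq_mul_four_mul hn
    _ = 4 * (n * centralBinom n ^ 2) := by ring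

theorem sq_factorial_div_prod_div_eq (n k₁ k₂ k₃ k₄ : ℕ) :
    ((n ! : ℝ) / (k₁ ! * k₂ ! * k₃ ! * k₄ !)) ^ 2 /
        ((2 * n)! / ((2 * k₁)! * (2 * k₂)! * (2 * k₃)! * (2 * k₄)!)) =
      centralBinom k₁ * centralBinom k₂ * centralBinom k₃ * centralBinom k₄ / centralBinom n := by
  simp only [← centralBinom_mul_factorial_sq, cast_mul, cast_pow]
  have hc := fun k => (centralBinom_pos k).ne'
  have hf := fun k => (factorial_pos k).ne'
  field_simp

theorem multinomial_sq_ratio_le (n k₁ k₂ k₃ k₄ : ℕ)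
    (h₁ : 0 < k₁) (h₂ : 0 < k₂) (h₃ : 0 < k₃) (h₄ : 0 < k₄)
    (hsum : k₁ + k₂ + k₃ + k₄ = n) :
    ((n.factorial : ℝ) /
          (k₁.factorial * k₂.factorial * k₃.factorial * k₄.factorial)) ^ 2 /
        (((2 * n).factorial : ℝ) /
          ((2 * k₁).factorial * (2 * k₂).factorial * (2 * k₃).factorial *
            (2 * k₄).factorial))
      ≤ Real.sqrt ((n : ℝ) / ((k₁ : ℝ) * k₂ * k₃ * k₄)) := by
  rw [sq_factorial_div_prod_div_eq]
  apply Real.le_sqrt_of_sq_le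
  have hbound := four_mul_centralBinom_prod_sq_mul_prod_le (by omega) hsum
  have hk : (0 : ℝ) < k₁ * k₂ * k₃ * k₄ := by
    exact_mod_cast Nat.mul_pos (Nat.mul_pos (Nat.mul_pos h₁ h₂) h₃) h₄
  rw [div_pow, div_le_div_iff₀ (pow_pos (mod_cast centralBinom_pos n) 2) hk]
  exact_mod_cast (Nat.le_mul_of_pos_left _ (by norm_num)).trans hbound
end

section
/- Let M be an antisymmetric 2n × 2n matrix over a commutative ring, and let ω = (1/2)·Σ_{μ,ν=1}^{2n} M_{μν} e_μ ∧ e_ν be the associated 2-form in the exterior algebra on generators e₁, …, e_{2n}. Then the n-th wedge power satisfies ω^{∧n} = n! · pf(M) · e₁ ∧ e₂ ∧ ⋯ ∧ e_{2n}, where pf(M) is the Pfaffian of M. -/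
open Matrix

/-- The set of permutations of `Fin (2n)` encoding perfect matchings in canonical form:
`σ(2j) < σ(2j+1)` for each `j`, and `σ(2j)` increasing in `j` (0-based indexing). -/
def pfMatchings (n : ℕ) : Finset (Equiv.Perm (Fin (2 * n))) :=
  Finset.univ.filter fun σ =>
    (∀ j : Fin n, σ ⟨2 * (j : ℕ), by have := j.isLt; omega⟩ <
        σ ⟨2 * (j : ℕ) + 1, by have := j.isLt; omega⟩) ∧
    ∀ j k : Fin n, j < k →
      σ ⟨2 * (j : ℕ), by have := j.isLt; omega⟩ <
        σ ⟨2 * (k : ℕ), by have := k.isLt; omega⟩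

/-- The Pfaffian of a `2n × 2n` matrix over a commutative ring,
`pf(M) = Σ_{matchings} sgn(π) ∏_j M_{π(2j-1),π(2j)}`
(equivalently `(1/(2ⁿ n!)) Σ_{π ∈ S_{2n}} sgn(π) ∏_j M_{π(2j-1),π(2j)}`). -/
def pfaffian {R : Type*} [CommRing R] {n : ℕ}
    (M : Matrix (Fin (2 * n)) (Fin (2 * n)) R) : R :=
  ∑ σ ∈ pfMatchings n,
    Equiv.Perm.sign σ •
      ∏ j : Fin n,
        M (σ ⟨2 * (j : ℕ), by have := j.isLt; omega⟩)
          (σ ⟨2 * (j : ℕ) + 1, by have := j.isLt; omega⟩)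

/-! Expanding `(∑_{μ<ν} M μ ν • e_μ e_ν) ^ n` multilinearly gives a sum over all index
sequences `f : Fin (2n) → Fin (2n)` of `∏ⱼ M (f 2j) (f (2j+1)) • e_{f 0} ⋯ e_{f (2n-1)}`, where
the coefficient vanishes unless every pair `(f 2j, f (2j+1))` is increasing. The wedge product
vanishes unless `f` is a permutation `σ`, and then equals `sign σ • e_0 ⋯ e_{2n-1}`. A
permutation with increasing pairs is uniquely a canonical matching permutation followed by a
permutation of the `n` pairs as blocks; the latter changes neither the sign nor the product,
which produces the factor `n!`. -/

lemma pow_sum_eq_sum_prod_ofFn {A ι : Type*} [Semiring A] [Fintype ι] (t : ι → A) (n : ℕ) :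
    (∑ i, t i) ^ n = ∑ d : Fin n → ι, (List.ofFn fun k => t (d k)).prod := by
  calc (∑ i, t i) ^ n = MultilinearMap.mkPiAlgebraFin ℕ n A fun _ => ∑ i, t i := by
        rw [MultilinearMap.mkPiAlgebraFin_apply, List.ofFn_const, List.prod_replicate]
    _ = _ := by
        simp only [MultilinearMap.map_sum, MultilinearMap.mkPiAlgebraFin_apply]

lemma List.prod_ofFn_smul {R A : Type*} [CommSemiring R] [Semiring A] [Algebra R A] {n : ℕ}
    (c : Fin n → R) (a : Fin n → A) :
    (List.ofFn fun k => c k • a k).prod = (∏ k, c k) • (List.ofFn a).prod := by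
  simp only [← MultilinearMap.mkPiAlgebraFin_apply (R := R), MultilinearMap.map_smul_univ]

lemma AlternatingMap.sum_smul_map_comp {R M N ι : Type*} [CommRing R] [AddCommGroup M]
    [Module R M] [AddCommGroup N] [Module R N] [Fintype ι] [DecidableEq ι]
    (g : M [⋀^ι]→ₗ[R] N) (v : ι → M) (a : (ι → ι) → R) :
    ∑ f : ι → ι, a f • g (fun i => v (f i)) =
      (∑ σ : Equiv.Perm ι, Equiv.Perm.sign σ • a σ) • g v := by
  have h_sub : (Finset.univ : Finset (Equiv.Perm ι)).map ⟨_, DFunLike.coe_injective⟩ ⊆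
      Finset.univ := Finset.subset_univ _
  rw [← Finset.sum_subset h_sub, Finset.sum_map, Finset.sum_smul]
  · refine Fintype.sum_congr _ _ fun σ => ?_
    rw [Function.Embedding.coeFn_mk, ← Function.comp_def, g.map_perm, smul_comm, smul_assoc]
  · intro f _ hf
    have hf_inj : ¬ Function.Injective f := fun hinj =>
      hf <| Finset.mem_map.mpr
        ⟨Equiv.ofBijective f hinj.bijective_of_finite, Finset.mem_univ _, rfl⟩
    rw [g.map_eq_zero_of_not_injective (fun i => v (f i)) fun h => hf_inj h.of_comp, smul_zero]

lemma Tuple.sort_eq_of_strictMono_comp {α : Type*} [LinearOrder α] {n : ℕ} {f : Fin n → α}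
    {σ : Equiv.Perm (Fin n)} (h : StrictMono (f ∘ σ)) : Tuple.sort f = σ :=
  (Tuple.eq_sort_iff.mpr ⟨h.monotone, fun _ _ hij hf => absurd hf (h hij).ne⟩).symm

namespace Pfaffian

variable {n : ℕ}

def evenIdx (j : Fin n) : Fin (2 * n) := ⟨2 * (j : ℕ), by have := j.isLt; omega⟩

def oddIdx (j : Fin n) : Fin (2 * n) := ⟨2 * (j : ℕ) + 1, by have := j.isLt; omega⟩

/-- `(j, r) ↦ 2j + r`. -/
def pairIdxEquiv (n : ℕ) : Fin n × Fin 2 ≃ Fin (2 * n) :=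
  finProdFinEquiv.trans (finCongr (Nat.mul_comm n 2))

@[simp] lemma pairIdxEquiv_zero (j : Fin n) : pairIdxEquiv n (j, 0) = evenIdx j :=
  Fin.ext (by simp [pairIdxEquiv, evenIdx, mul_comm])

@[simp] lemma pairIdxEquiv_one (j : Fin n) : pairIdxEquiv n (j, 1) = oddIdx j :=
  Fin.ext (by simp [pairIdxEquiv, oddIdx]; omega)

def pairsEquiv (n : ℕ) (X : Type*) : (Fin n → X × X) ≃ (Fin (2 * n) → X) :=
  (Equiv.piCongrRight fun _ => (piFinTwoEquiv fun _ => X).symm).trans <|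
    (Equiv.curry _ _ _).symm.trans <| (pairIdxEquiv n).arrowCongr (Equiv.refl X)

@[simp] lemma pairsEquiv_evenIdx {X : Type*} (d : Fin n → X × X) (j : Fin n) :
    pairsEquiv n X d (evenIdx j) = (d j).1 := by
  rw [← pairIdxEquiv_zero]; simp [pairsEquiv, -pairIdxEquiv_zero]

@[simp] lemma pairsEquiv_oddIdx {X : Type*} (d : Fin n → X × X) (j : Fin n) :
    pairsEquiv n X d (oddIdx j) = (d j).2 := by
  rw [← pairIdxEquiv_one]; simp [pairsEquiv, -pairIdxEquiv_one]

lemma prod_ofFn_eq_prod_ofFn_pairs {A : Type*} [Monoid A] (g : Fin (2 * n) → A) :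
    (List.ofFn g).prod = (List.ofFn fun j => g (evenIdx j) * g (oddIdx j)).prod := by
  rw [List.ofFn_mul' g, List.prod_flatten, List.map_ofFn]
  congr 2
  funext j
  simp only [Function.comp_apply, List.ofFn_succ, List.ofFn_zero, List.prod_cons,
    List.prod_nil, mul_one]
  rfl

def pairProd {X R : Type*} [CommMonoid R] (c : X → X → R) (f : Fin (2 * n) → X) : R :=
  ∏ j : Fin n, c (f (evenIdx j)) (f (oddIdx j))

lemma pow_sum_sum_smul_mul {R A X : Type*} [CommSemiring R] [Semiring A] [Algebra R A]
    [Fintype X] (c : X → X → R) (x : X → A) (n : ℕ) :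
    (∑ μ, ∑ ν, c μ ν • (x μ * x ν)) ^ n =
      ∑ f : Fin (2 * n) → X, pairProd c f • (List.ofFn fun k => x (f k)).prod := by
  rw [← Fintype.sum_prod_type', pow_sum_eq_sum_prod_ofFn,
    ← (pairsEquiv n X).sum_comp]
  refine Fintype.sum_congr _ _ fun d => ?_
  rw [List.prod_ofFn_smul, prod_ofFn_eq_prod_ofFn_pairs (fun k => x (pairsEquiv n X d k))]
  simp [pairProd]

def PairsIncreasing {α : Type*} [LinearOrder α] (f : Fin (2 * n) → α) : Prop :=
  ∀ j, f (evenIdx j) < f (oddIdx j)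

instance {α : Type*} [LinearOrder α] : DecidablePred (PairsIncreasing (n := n) (α := α)) :=
  fun _ => Fintype.decidableForallFintype

lemma mem_pfMatchings {π : Equiv.Perm (Fin (2 * n))} :
    π ∈ pfMatchings n ↔ PairsIncreasing π ∧ StrictMono (π ∘ evenIdx) := by
  simp only [pfMatchings, Finset.mem_filter, Finset.mem_univ, true_and]
  rfl

/-- The permutation `2j + r ↦ 2τ(j) + r`, moving the pairs `{2j, 2j+1}` as blocks. -/
def blockPerm (n : ℕ) : Equiv.Perm (Fin n) →* Equiv.Perm (Fin (2 * n)) where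
  toFun τ := (pairIdxEquiv n).permCongr (Equiv.prodCongrLeft fun _ => τ)
  map_one' := Equiv.ext fun k => by
    obtain ⟨⟨j, r⟩, rfl⟩ := (pairIdxEquiv n).surjective k
    simp [Equiv.permCongr_apply]
  map_mul' _ _ := Equiv.ext fun k => by
    obtain ⟨⟨j, r⟩, rfl⟩ := (pairIdxEquiv n).surjective k
    simp [Equiv.permCongr_apply]

@[simp] lemma blockPerm_evenIdx (τ : Equiv.Perm (Fin n)) (j : Fin n) :
    blockPerm n τ (evenIdx j) = evenIdx (τ j) := by
  simp only [← pairIdxEquiv_zero, blockPerm, MonoidHom.coe_mk, OneHom.coe_mk,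
    Equiv.permCongr_apply, Equiv.symm_apply_apply, Equiv.prodCongrLeft_apply]

@[simp] lemma blockPerm_oddIdx (τ : Equiv.Perm (Fin n)) (j : Fin n) :
    blockPerm n τ (oddIdx j) = oddIdx (τ j) := by
  simp only [← pairIdxEquiv_one, blockPerm, MonoidHom.coe_mk, OneHom.coe_mk,
    Equiv.permCongr_apply, Equiv.symm_apply_apply, Equiv.prodCongrLeft_apply]

@[simp] lemma sign_blockPerm (τ : Equiv.Perm (Fin n)) : Equiv.Perm.sign (blockPerm n τ) = 1 := by
  simp [blockPerm, Equiv.Perm.sign_permCongr, Equiv.Perm.sign_prodCongrLeft]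

lemma pairsIncreasing_comp_blockPerm {α : Type*} [LinearOrder α] {f : Fin (2 * n) → α}
    (hf : PairsIncreasing f) (τ : Equiv.Perm (Fin n)) : PairsIncreasing (f ∘ blockPerm n τ) :=
  fun j => by simpa using hf (τ j)

lemma pairProd_comp_blockPerm {X R : Type*} [CommMonoid R] (c : X → X → R)
    (f : Fin (2 * n) → X) (τ : Equiv.Perm (Fin n)) :
    pairProd c (f ∘ blockPerm n τ) = pairProd c f := by
  simpa [pairProd] using Equiv.prod_comp τ fun j => c (f (evenIdx j)) (f (oddIdx j))

lemma evenIdx_injective : Function.Injective (evenIdx (n := n)) := fun _ _ h =>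
  Fin.ext (by simpa [evenIdx] using congrArg Fin.val h)

/-- Every pairwise increasing permutation is uniquely `π * blockPerm n τ` with `π` canonical:
`τ⁻¹` sorts the first entries of the pairs. -/
lemma sum_pairsIncreasing_eq_sum_pfMatchings {N : Type*} [AddCommMonoid N]
    (F : Equiv.Perm (Fin (2 * n)) → N) :
    ∑ σ ∈ Finset.univ.filter fun σ : Equiv.Perm (Fin (2 * n)) => PairsIncreasing σ, F σ =
      ∑ π ∈ pfMatchings n, ∑ τ, F (π * blockPerm n τ) := by
  set sorter : Equiv.Perm (Fin (2 * n)) → Equiv.Perm (Fin n) :=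
    fun σ => Tuple.sort (σ ∘ evenIdx)
  have sorter_strictMono (σ : Equiv.Perm (Fin (2 * n))) :
      StrictMono ((σ ∘ evenIdx) ∘ sorter σ) :=
    (Tuple.monotone_sort _).strictMono_of_injective
      ((σ.injective.comp evenIdx_injective).comp (sorter σ).injective)
  rw [← Finset.sum_product']
  refine (Finset.sum_nbij' (fun p => p.1 * blockPerm n p.2)
    (fun σ => (σ * blockPerm n (sorter σ), (sorter σ)⁻¹)) ?_ ?_ ?_ ?_ fun _ _ => rfl).symm
  · rintro ⟨π, τ⟩ h
    simp only [Finset.mem_product, mem_pfMatchings] at h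
    simpa using pairsIncreasing_comp_blockPerm h.1.1 τ
  · intro σ h
    simp only [Finset.mem_filter, Finset.mem_univ, true_and] at h
    simp only [Finset.mem_product, mem_pfMatchings, Finset.mem_univ, and_true,
      Equiv.Perm.coe_mul]
    refine ⟨pairsIncreasing_comp_blockPerm h _, ?_⟩
    simpa [Function.comp_def] using sorter_strictMono σ
  · rintro ⟨π, τ⟩ h
    simp only [Finset.mem_product, mem_pfMatchings] at h
    have : sorter (π * blockPerm n τ) = τ⁻¹ :=
      Tuple.sort_eq_of_strictMono_comp (by simpa [Function.comp_def] using h.1.2)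
    simp [this]
  · intro σ _
    simp

lemma pfaffian_eq_sum_pairProd {R : Type*} [CommRing R]
    (M : Matrix (Fin (2 * n)) (Fin (2 * n)) R) :
    pfaffian M = ∑ π ∈ pfMatchings n, Equiv.Perm.sign π • pairProd (M · ·) π :=
  rfl

lemma sum_sign_smul_pairProd_upper {R : Type*} [CommRing R]
    (M : Matrix (Fin (2 * n)) (Fin (2 * n)) R) :
    ∑ σ : Equiv.Perm (Fin (2 * n)),
        Equiv.Perm.sign σ • pairProd (fun μ ν => if μ < ν then M μ ν else 0) σ =
      n.factorial * pfaffian M := by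
  have h_upper (σ : Equiv.Perm (Fin (2 * n))) :
      pairProd (fun μ ν => if μ < ν then M μ ν else 0) σ =
        if PairsIncreasing σ then pairProd (M · ·) σ else 0 :=
    Fintype.prod_ite_zero
  simp_rw [h_upper, smul_ite, smul_zero, ← Finset.sum_filter,
    sum_pairsIncreasing_eq_sum_pfMatchings, map_mul, sign_blockPerm, mul_one,
    Equiv.Perm.coe_mul, pairProd_comp_blockPerm, Finset.sum_const, Finset.card_univ,
    Fintype.card_perm, Fintype.card_fin, pfaffian_eq_sum_pairProd, Finset.mul_sum, nsmul_eq_mul]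

end Pfaffian

theorem wedge_pow_eq_pfaffian_general {R : Type*} [CommRing R] (n : ℕ)
    (M : Matrix (Fin (2 * n)) (Fin (2 * n)) R) :
    (∑ μ : Fin (2 * n), ∑ ν : Fin (2 * n),
          if μ < ν then
            M μ ν •
              (ExteriorAlgebra.ι R (Pi.single μ (1 : R) : Fin (2 * n) → R) *
                ExteriorAlgebra.ι R (Pi.single ν (1 : R) : Fin (2 * n) → R))
          else 0) ^ n
      = ((n.factorial : R) * pfaffian M) •
          ((List.finRange (2 * n)).map fun μ =>
            ExteriorAlgebra.ι R (Pi.single μ (1 : R) : Fin (2 * n) → R)).prod := by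
  simp_rw [← ite_zero_smul, Pfaffian.pow_sum_sum_smul_mul, ← ExteriorAlgebra.ιMulti_apply]
  rw [AlternatingMap.sum_smul_map_comp (ExteriorAlgebra.ιMulti R (2 * n))
      (fun μ => Pi.single μ (1 : R)),
    Pfaffian.sum_sign_smul_pairProd_upper, ExteriorAlgebra.ιMulti_apply, List.ofFn_eq_map]

/-- For an antisymmetric `M`, the 2-form
`ω = (1/2)·Σ_{μ,ν} M_{μν} e_μ ∧ e_ν = Σ_{μ<ν} M_{μν} e_μ ∧ e_ν` satisfies
`ω^{∧n} = n! · pf(M) · e₁ ∧ ⋯ ∧ e_{2n}`. -/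
theorem wedge_pow_eq_pfaffian {R : Type*} [CommRing R] (n : ℕ)
    (M : Matrix (Fin (2 * n)) (Fin (2 * n)) R) (hM : Mᵀ = -M) :
    (∑ μ : Fin (2 * n), ∑ ν : Fin (2 * n),
          if μ < ν then
            M μ ν •
              (ExteriorAlgebra.ι R (Pi.single μ (1 : R) : Fin (2 * n) → R) *
                ExteriorAlgebra.ι R (Pi.single ν (1 : R) : Fin (2 * n) → R))
          else 0) ^ n
      = ((n.factorial : R) * pfaffian M) •
          ((List.finRange (2 * n)).map fun μ =>
            ExteriorAlgebra.ι R (Pi.single μ (1 : R) : Fin (2 * n) → R)).prod :=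
  wedge_pow_eq_pfaffian_general n M
end

section
/- Let m be a positive even integer and let M be the m × m antisymmetric matrix with entries M_{ij} = (-1)^{i+j+1} for i < j (and M_{ij} = -M_{ji}, M_{ii} = 0). Then for every subset J ⊆ {1,…,m} of even cardinality, the Pfaffian of the principal submatrix M|_J (rows and columns indexed by J) equals ε(J) := (-1)^{|J|(|J|-1)/2 + Σ_{j∈J} j}. -/
open Matrix

/-- The antisymmetric matrix with `M_{ij} = (-1)^{i+j+1}` for `i < j` (the formula is
insensitive to 0- vs 1-based indexing since it depends only on the parity of `i+j`). -/
def altSign (m : ℕ) : Matrix (Fin m) (Fin m) ℤ := fun i j =>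
  if i < j then (-1) ^ ((i : ℕ) + (j : ℕ) + 1)
  else if j < i then -((-1) ^ ((j : ℕ) + (i : ℕ) + 1))
  else 0

/-!
Above the diagonal the matrix factors as `M_{ab} = -(g a * g b)` with `g a = (-1)^a`, so every
canonical matching of `J` contributes `sgn σ · (-1)^r · ∏_{j ∈ J} (-1)^j`, and the Pfaffian is
this common value times `∑_σ sgn σ`. That sum is `1`: the identity matching contributes `1`, and
the other matchings cancel in pairs under the sign-reversing involution which, at the first moved
position `p`, swaps the partner of `p` with the partner of the value `p`. Finally
`|J|(|J|-1)/2 + ∑_{j∈J} (j+1) = r(2r-1) + 2r + ∑ j ≡ r + ∑ j (mod 2)`.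
-/

open Equiv

section Matchings

variable {n : ℕ} {σ : Perm (Fin (2 * n))}

lemma mem_pfMatchings_iff :
    σ ∈ pfMatchings n ↔
      (∀ a b : Fin (2 * n), (a : ℕ) % 2 = 0 → (b : ℕ) = a + 1 → σ a < σ b) ∧
      ∀ a b : Fin (2 * n), (a : ℕ) % 2 = 0 → (b : ℕ) % 2 = 0 → a < b → σ a < σ b := by
  have half : ∀ a : Fin (2 * n), (a : ℕ) % 2 = 0 →
      ∃ j : Fin n, a = ⟨2 * (j : ℕ), by have := j.isLt; omega⟩ := fun a ha =>
    ⟨⟨a / 2, by omega⟩, Fin.ext (by simp only; omega)⟩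
  simp only [pfMatchings, Finset.mem_filter, Finset.mem_univ, true_and]
  constructor
  · rintro ⟨hpair, hfirst⟩
    refine ⟨fun a b ha hb => ?_, fun a b ha hb hab => ?_⟩
    · obtain ⟨j, rfl⟩ := half a ha
      rw [show b = ⟨2 * (j : ℕ) + 1, by omega⟩ from Fin.ext hb]
      exact hpair j
    · obtain ⟨j, rfl⟩ := half a ha
      obtain ⟨k, rfl⟩ := half b hb
      exact hfirst j k (by rw [Fin.lt_def] at hab ⊢; simp only at hab; omega)
  · rintro ⟨hpair, hfirst⟩
    refine ⟨fun j => hpair _ _ (by simp) rfl, fun j k hjk => hfirst _ _ (by simp) (by simp) ?_⟩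
    rw [Fin.lt_def] at hjk ⊢
    simpa using hjk

lemma one_mem_pfMatchings : (1 : Perm (Fin (2 * n))) ∈ pfMatchings n :=
  mem_pfMatchings_iff.mpr
    ⟨fun a b _ hb => by simp [Fin.lt_def, hb], fun _ _ _ _ hab => by simpa using hab⟩

/-- Only second entries of pairs move, so the ordering of the first entries is untouched. -/
lemma mul_swap_mem_pfMatchings (hσ : σ ∈ pfMatchings n) {p y : Fin (2 * n)}
    (hp : (p : ℕ) % 2 = 1) (hy : (y : ℕ) % 2 = 1)
    (hpy : ∀ a : Fin (2 * n), (a : ℕ) + 1 = p → σ a < σ y)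
    (hyp : ∀ a : Fin (2 * n), (a : ℕ) + 1 = y → σ a < σ p) :
    σ * swap p y ∈ pfMatchings n := by
  obtain ⟨hpair, hfirst⟩ := mem_pfMatchings_iff.mp hσ
  have heven : ∀ a : Fin (2 * n), (a : ℕ) % 2 = 0 → (σ * swap p y) a = σ a := fun a ha => by
    rw [Perm.mul_apply, swap_apply_of_ne_of_ne (by rintro rfl; omega) (by rintro rfl; omega)]
  refine mem_pfMatchings_iff.mpr ⟨fun a b ha hb => ?_, fun a b ha hb hab => ?_⟩
  · rw [heven a ha, Perm.mul_apply]
    by_cases hbp : b = p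
    · rw [hbp, swap_apply_left]
      exact hpy a (by omega)
    by_cases hby : b = y
    · rw [hby, swap_apply_right]
      exact hyp a (by omega)
    · rw [swap_apply_of_ne_of_ne hbp hby]
      exact hpair a b ha hb
  · rw [heven a ha, heven b hb]
    exact hfirst a b ha hb hab

lemma coe_finRotate_of_add_one_lt {N : ℕ} {x : Fin N} (h : (x : ℕ) + 1 < N) :
    (finRotate N x : ℕ) = x + 1 := by
  obtain ⟨k, rfl⟩ : ∃ k, N = k + 1 := ⟨N - 1, by omega⟩
  exact coe_finRotate_of_ne_last (Fin.ne_of_val_ne (by simp only [Fin.val_last]; omega))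

/-- In a canonical matching, the first moved position `p` is the second entry of its pair, and
the value `p` sits at the first entry `σ⁻¹ p` of a later pair. -/
lemma first_moved_of_mem_pfMatchings (hσ : σ ∈ pfMatchings n) {p : Fin (2 * n)}
    (hp : σ p ≠ p) (hfix : ∀ q < p, σ q = q) :
    (p : ℕ) % 2 = 1 ∧ (σ⁻¹ p : ℕ) % 2 = 0 ∧ p < σ⁻¹ p ∧ p < σ p := by
  obtain ⟨hpair, hfirst⟩ := mem_pfMatchings_iff.mp hσ
  have hfix' : ∀ a, σ a < p → a < p := fun a ha => by
    rwa [← σ.injective (hfix _ ha)]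
  have hσp : p < σ p := lt_of_le_of_ne (not_lt.mp fun h => hp (σ.injective (hfix _ h))) hp.symm
  have hσx : σ (σ⁻¹ p) = p := σ.apply_symm_apply p
  have hpx : p < σ⁻¹ p := by
    rcases lt_trichotomy (σ⁻¹ p) p with h | h | h
    · exact absurd ((hfix _ h).symm.trans hσx) h.ne
    · rw [h] at hσx; exact absurd hσx hp
    · exact h
  have hxeven : (σ⁻¹ p : ℕ) % 2 = 0 := by
    by_contra hodd
    have ha : (σ⁻¹ p : ℕ) - 1 < 2 * n := by omega
    have hprev : σ ⟨_, ha⟩ < p :=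
      (hpair ⟨_, ha⟩ (σ⁻¹ p) (by simp only; omega) (by simp only; omega)).trans_eq hσx
    have := hfix' _ hprev
    rw [Fin.lt_def] at this hpx
    simp only at this
    omega
  refine ⟨?_, hxeven, hpx, hσp⟩
  by_contra hpeven
  exact (hfirst p _ (by omega) hxeven hpx).trans_eq hσx |>.not_gt hσp

end Matchings

section Flip

variable {n : ℕ} {σ : Perm (Fin (2 * n))}

/-- The sign-reversing involution on non-identity canonical matchings: with `p` the first moved
position, exchange the values at `p` and at `σ⁻¹ p + 1`, the partner of the value `p`
(`finRotate` is `x ↦ x + 1` away from the last position). -/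
noncomputable def pfFlip (σ : Perm (Fin (2 * n))) : Perm (Fin (2 * n)) :=
  if h : σ.support.Nonempty then
    σ * swap (σ.support.min' h) (finRotate _ (σ⁻¹ (σ.support.min' h)))
  else σ

lemma pfFlip_eq {p : Fin (2 * n)} (hp : σ p ≠ p) (hfix : ∀ q < p, σ q = q) :
    pfFlip σ = σ * swap p (finRotate _ (σ⁻¹ p)) := by
  have hmem : p ∈ σ.support := Perm.mem_support.mpr hp
  have hmin : σ.support.min' ⟨p, hmem⟩ = p := by
    refine le_antisymm (Finset.min'_le _ _ hmem) (not_lt.mp fun h => ?_)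
    exact Perm.mem_support.mp (Finset.min'_mem _ ⟨p, hmem⟩) (hfix _ h)
  rw [pfFlip, dif_pos ⟨p, hmem⟩, hmin]

lemma exists_first_moved (h1 : σ ≠ 1) : ∃ p, σ p ≠ p ∧ ∀ q < p, σ q = q := by
  have hne : σ.support.Nonempty :=
    Finset.nonempty_iff_ne_empty.mpr (mt Perm.support_eq_empty_iff.mp h1)
  refine ⟨σ.support.min' hne, Perm.mem_support.mp (Finset.min'_mem _ hne), fun q hq => ?_⟩
  by_contra h
  exact hq.not_ge (Finset.min'_le _ _ (Perm.mem_support.mpr h))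

lemma pfFlip_spec (hσ : σ ∈ (pfMatchings n).erase 1) :
    (∃ p y, p ≠ y ∧ pfFlip σ = σ * swap p y) ∧ pfFlip σ ∈ (pfMatchings n).erase 1 ∧
      pfFlip (pfFlip σ) = σ := by
  obtain ⟨h1, hσ⟩ := Finset.mem_erase.mp hσ
  obtain ⟨p, hp, hfix⟩ := exists_first_moved h1
  obtain ⟨hpodd, hxeven, hpx, hσp⟩ := first_moved_of_mem_pfMatchings hσ hp hfix
  obtain ⟨hpair, -⟩ := mem_pfMatchings_iff.mp hσ
  set x := σ⁻¹ p
  set y := finRotate _ x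
  have hσx : σ x = p := σ.apply_symm_apply p
  have hyval : (y : ℕ) = x + 1 := coe_finRotate_of_add_one_lt (by omega)
  have hpy : p < y := Fin.lt_def.mpr (by rw [Fin.lt_def] at hpx; omega)
  have hxy : x < y := Fin.lt_def.mpr (by omega)
  have hσy : p < σ y := hσx ▸ hpair x y hxeven hyval
  rw [pfFlip_eq hp hfix]
  set τ := σ * swap p y
  have hτp : τ p ≠ p := by simpa [τ] using hσy.ne'
  have hτx : τ x = p := by
    rw [Perm.mul_apply, swap_apply_of_ne_of_ne hpx.ne' hxy.ne, hσx]
  have hτfix : ∀ q < p, τ q = q := fun q hq => by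
    rw [Perm.mul_apply, swap_apply_of_ne_of_ne hq.ne (hq.trans hpy).ne, hfix q hq]
  have hτ : τ ∈ pfMatchings n := by
    refine mul_swap_mem_pfMatchings hσ hpodd (by omega) (fun a ha => ?_) (fun a ha => ?_)
    · have hap : a < p := Fin.lt_def.mpr (by omega)
      exact (hfix a hap).trans_lt hap |>.trans hσy
    · rw [show a = x from Fin.ext (by omega), hσx]
      exact hσp
  refine ⟨⟨p, y, hpy.ne, rfl⟩,
    Finset.mem_erase.mpr ⟨fun h => hτp (by rw [h, Perm.one_apply]), hτ⟩, ?_⟩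
  rw [pfFlip_eq hτp hτfix, Perm.inv_eq_iff_eq.mpr hτx.symm, mul_assoc, Equiv.swap_mul_self,
    mul_one]

theorem sum_sign_pfMatchings (n : ℕ) :
    ∑ σ ∈ pfMatchings n, (Perm.sign σ : ℤ) = 1 := by
  rw [← Finset.add_sum_erase _ _ one_mem_pfMatchings, Perm.sign_one, Units.val_one,
    add_eq_left]
  refine Finset.sum_involution (fun σ _ => pfFlip σ) (fun σ hσ => ?_) (fun σ hσ _ => ?_)
    (fun σ hσ => (pfFlip_spec hσ).2.1) (fun σ hσ => (pfFlip_spec hσ).2.2)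
  · obtain ⟨p, y, hpy, heq⟩ := (pfFlip_spec hσ).1
    simp [heq, Perm.sign_mul, Perm.sign_swap hpy]
  · obtain ⟨p, y, hpy, heq⟩ := (pfFlip_spec hσ).1
    rw [heq, Ne, mul_eq_left, swap_eq_one_iff]
    exact hpy

end Flip

lemma Fin.prod_univ_pairs {M : Type*} [CommMonoid M] {r : ℕ} (f : Fin (2 * r) → M) :
    ∏ j : Fin r, f ⟨2 * (j : ℕ), by have := j.isLt; omega⟩ *
        f ⟨2 * (j : ℕ) + 1, by have := j.isLt; omega⟩ = ∏ i, f i := by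
  rw [← (finProdFinEquiv.trans (finCongr (Nat.mul_comm r 2))).prod_comp, Fintype.prod_prod_type]
  refine Finset.prod_congr rfl fun j _ => ?_
  rw [Fin.prod_univ_two]
  congr 2 <;> ext <;> simp
  omega

theorem pfaffian_eq_of_apply_of_lt {R : Type*} [CommRing R] {n : ℕ}
    (M : Matrix (Fin (2 * n)) (Fin (2 * n)) R) (g : Fin (2 * n) → R)
    (hM : ∀ a b, a < b → M a b = -(g a * g b)) :
    pfaffian M = (-1) ^ n * ∏ a, g a := by
  have hterm : ∀ σ ∈ pfMatchings n,
      ∏ j : Fin n, M (σ ⟨2 * (j : ℕ), by have := j.isLt; omega⟩)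
        (σ ⟨2 * (j : ℕ) + 1, by have := j.isLt; omega⟩) = (-1) ^ n * ∏ a, g a := by
    intro σ hσ
    obtain ⟨hpair, -⟩ := mem_pfMatchings_iff.mp hσ
    rw [Finset.prod_congr rfl fun j _ => hM _ _ (hpair _ _ (by simp) rfl),
      Finset.prod_neg, Finset.card_univ, Fintype.card_fin,
      Fin.prod_univ_pairs (fun a => g (σ a)), Equiv.prod_comp σ g]
  simp only [pfaffian, Finset.sum_congr rfl fun σ hσ => congrArg _ (hterm σ hσ), Units.smul_def,
    ← Finset.sum_smul, sum_sign_pfMatchings, one_smul]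

lemma altSign_of_lt {m : ℕ} {i j : Fin m} (h : i < j) :
    altSign m i j = -((-1) ^ (i : ℕ) * (-1) ^ (j : ℕ)) := by
  rw [altSign, if_pos h, pow_succ, pow_add]
  ring

theorem pfaffian_altSign_submatrix_general (m r : ℕ)
    (J : Finset (Fin m)) (hJ : J.card = 2 * r) :
    pfaffian (Matrix.of fun i j : Fin (2 * r) =>
        altSign m ((J.orderIsoOfFin hJ i : Fin m)) ((J.orderIsoOfFin hJ j : Fin m)))
      = (-1 : ℤ) ^ (J.card * (J.card - 1) / 2 + ∑ j ∈ J, ((j : ℕ) + 1)) := by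
  set e := J.orderIsoOfFin hJ
  have hprod : ∏ a, (-1 : ℤ) ^ (e a : ℕ) = (-1) ^ ∑ j ∈ J, (j : ℕ) := by
    rw [← Finset.prod_pow_eq_pow_sum, ← Finset.prod_coe_sort J]
    exact e.toEquiv.prod_comp (fun j : J => (-1 : ℤ) ^ (j : ℕ))
  refine (pfaffian_eq_of_apply_of_lt _ (fun a => (-1) ^ (e a : ℕ))
    fun a b hab => altSign_of_lt (e.strictMono hab)).trans ?_
  rw [hprod, ← pow_add, Finset.sum_add_distrib, Finset.sum_const, hJ, smul_eq_mul, mul_one]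
  have hexp : 2 * r * (2 * r - 1) / 2 + (∑ j ∈ J, (j : ℕ) + 2 * r)
      = r + ∑ j ∈ J, (j : ℕ) + 2 * (r * r) := by
    rw [mul_assoc, Nat.mul_div_cancel_left _ two_pos]
    cases r with
    | zero => simp
    | succ r => rw [show 2 * (r + 1) - 1 = 2 * r + 1 by omega]; ring
  rw [hexp, pow_add _ _ (2 * _), pow_mul, neg_one_sq, one_pow, mul_one]

/-- For even `m` and every subset `J ⊆ {1,…,m}` of even cardinality `2r`, the Pfaffian
of the principal submatrix `M|_J` of the matrix with `M_{ij} = (-1)^{i+j+1}` (`i<j`)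
equals `ε(J) = (-1)^{|J|(|J|-1)/2 + Σ_{j∈J} j}` (with 1-based element values `j`). -/
theorem pfaffian_altSign_submatrix (m r : ℕ) (hm : m % 2 = 0) (hm0 : 0 < m)
    (J : Finset (Fin m)) (hJ : J.card = 2 * r) :
    pfaffian (Matrix.of fun i j : Fin (2 * r) =>
        altSign m ((J.orderIsoOfFin hJ i : Fin m)) ((J.orderIsoOfFin hJ j : Fin m)))
      = (-1 : ℤ) ^ (J.card * (J.card - 1) / 2 + ∑ j ∈ J, ((j : ℕ) + 1)) :=
  pfaffian_altSign_submatrix_general m r J hJ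
end

section
/- Let A and C be antisymmetric 2r × 2r real (or complex) matrices with A invertible. Then the derivative at z = 0 of the polynomial function z ↦ pf(A + z·C) equals (1/2) · pf(A) · tr(A⁻¹·C). -/
open Matrix

/-!
Differentiating the defining sum term by term, the derivative is
`D = ∑_σ sgn σ ∑_j (∏_{l ≠ j} A_{σ(2l) σ(2l+1)}) C_{σ(2j) σ(2j+1)}`.
Expanding `pf` along a row `k` introduces the Pfaffian adjugate `Q`, where `Q_{bk}` is the Pfaffian
of `A` with row and column `k` replaced by the unit vector `e_b`; then `tr (Q C) = 2 D`, because
every pair of a matching is reached from both of its ends. The same expansion gives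
`A Q = pf(A) • 1`: on the diagonal it re-expands `pf(A)`, off the diagonal it is the Pfaffian of
an antisymmetric matrix with two equal rows. Such a Pfaffian vanishes: summed over all of `S_{2n}`
the terms count each matching `2ⁿ n!` times (the hyperoctahedral group permutes and flips pairs),
and the transposition of the two rows negates that sum. Hence `Q = pf(A) • A⁻¹` and
`2 D = pf(A) tr (A⁻¹ C)`.
-/

namespace Pfaffian

open Equiv Finset

variable {n : ℕ}

def pairFst (j : Fin n) : Fin (2 * n) := ⟨2 * j, by omega⟩

def pairSnd (j : Fin n) : Fin (2 * n) := ⟨2 * j + 1, by omega⟩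

def pairOf (x : Fin (2 * n)) : Fin n := ⟨x / 2, by omega⟩

@[simp] lemma pairOf_pairFst (j : Fin n) : pairOf (pairFst j) = j := by
  ext; simp [pairOf, pairFst]

@[simp] lemma pairOf_pairSnd (j : Fin n) : pairOf (pairSnd j) = j := by
  ext; simp only [pairOf, pairSnd]; omega

lemma pairFst_ne_pairSnd (j l : Fin n) : pairFst j ≠ pairSnd l := by
  simp only [pairFst, pairSnd, ne_eq, Fin.mk.injEq]; omega

lemma eq_pairFst_or_eq_pairSnd (x : Fin (2 * n)) :
    x = pairFst (pairOf x) ∨ x = pairSnd (pairOf x) := by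
  simp only [pairFst, pairSnd, pairOf, Fin.ext_iff]; omega

def pairEquiv : Fin n × Fin 2 ≃ Fin (2 * n) :=
  finProdFinEquiv.trans (finCongr (Nat.mul_comm n 2))

@[simp] lemma pairEquiv_zero (j : Fin n) : pairEquiv (j, 0) = pairFst j := by
  ext; simp [pairEquiv, pairFst]

@[simp] lemma pairEquiv_one (j : Fin n) : pairEquiv (j, 1) = pairSnd j := by
  ext; simp [pairEquiv, pairSnd, add_comm]

lemma sum_univ_eq_sum_pairs {M : Type*} [AddCommMonoid M] (f : Fin (2 * n) → M) :
    ∑ x, f x = ∑ j, (f (pairFst j) + f (pairSnd j)) := by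
  rw [← pairEquiv.sum_comp, Fintype.sum_prod_type]
  simp [Fin.sum_univ_two]

def pairPerm (ε : Fin n → Bool) (π : Perm (Fin n)) : Perm (Fin (2 * n)) :=
  pairEquiv.permCongr
    (prodCongrLeft (fun _ => π) * prodCongrRight fun j => if ε j then swap 0 1 else 1)

lemma pairPerm_pairFst (ε : Fin n → Bool) (π : Perm (Fin n)) (j : Fin n) :
    pairPerm ε π (pairFst j) = if ε j then pairSnd (π j) else pairFst (π j) := by
  rw [← pairEquiv_zero, pairPerm, permCongr_apply, symm_apply_apply]
  cases h : ε j <;> simp [h]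

lemma pairPerm_pairSnd (ε : Fin n → Bool) (π : Perm (Fin n)) (j : Fin n) :
    pairPerm ε π (pairSnd j) = if ε j then pairFst (π j) else pairSnd (π j) := by
  rw [← pairEquiv_one, pairPerm, permCongr_apply, symm_apply_apply]
  cases h : ε j <;> simp [h]

lemma sign_pairPerm (ε : Fin n → Bool) (π : Perm (Fin n)) :
    Perm.sign (pairPerm ε π) = ∏ j, if ε j then -1 else 1 := by
  rw [pairPerm, Perm.sign_permCongr, map_mul, Perm.sign_prodCongrLeft,
    Perm.sign_prodCongrRight, Fin.prod_univ_two, Int.units_mul_self, one_mul]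
  refine prod_congr rfl fun j _ => ?_
  cases ε j <;> simp

lemma pairPerm_inv (ε : Fin n → Bool) (π : Perm (Fin n)) :
    (pairPerm ε π)⁻¹ = pairPerm (fun j => ε (π⁻¹ j)) π⁻¹ := by
  refine inv_eq_of_mul_eq_one_right (Equiv.ext fun x => ?_)
  rcases eq_pairFst_or_eq_pairSnd x with hx | hx <;> rw [hx] <;>
    cases h : ε (π.symm (pairOf x)) <;> simp [pairPerm_pairFst, pairPerm_pairSnd, h]

lemma apply_eq_neg_of_transpose_eq_neg {ι R : Type*} [Neg R] {M : Matrix ι ι R}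
    (hM : Mᵀ = -M) (a b : ι) : M b a = -M a b := by
  simpa using congrFun₂ hM a b

lemma diag_eq_zero_of_transpose_eq_neg {ι R : Type*} [AddGroup R] [IsAddTorsionFree R]
    {M : Matrix ι ι R} (hM : Mᵀ = -M) (a : ι) : M a a = 0 :=
  self_eq_neg.mp (apply_eq_neg_of_transpose_eq_neg hM a a)

section CommRing

variable {R : Type*} [CommRing R]

def matchingTerm (M : Matrix (Fin (2 * n)) (Fin (2 * n)) R) (σ : Perm (Fin (2 * n))) : R :=
  Perm.sign σ • ∏ j, M (σ (pairFst j)) (σ (pairSnd j))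

lemma pfaffian_eq_sum_matchingTerm (M : Matrix (Fin (2 * n)) (Fin (2 * n)) R) :
    pfaffian M = ∑ σ ∈ pfMatchings n, matchingTerm M σ :=
  rfl

lemma mem_pfMatchings_s16 {σ : Perm (Fin (2 * n))} :
    σ ∈ pfMatchings n ↔ (∀ j, σ (pairFst j) < σ (pairSnd j)) ∧
      ∀ j k, j < k → σ (pairFst j) < σ (pairFst k) := by
  simp [pfMatchings, pairFst, pairSnd]

lemma matchingTerm_mul_pairPerm {M : Matrix (Fin (2 * n)) (Fin (2 * n)) R} (hM : Mᵀ = -M)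
    (σ : Perm (Fin (2 * n))) (ε : Fin n → Bool) (π : Perm (Fin n)) :
    matchingTerm M (σ * pairPerm ε π) = matchingTerm M σ := by
  have hfactor : ∀ j, M ((σ * pairPerm ε π) (pairFst j)) ((σ * pairPerm ε π) (pairSnd j)) =
      (if ε j then -1 else 1 : ℤˣ) • M (σ (pairFst (π j))) (σ (pairSnd (π j))) := by
    intro j
    simp only [Perm.mul_apply, pairPerm_pairFst, pairPerm_pairSnd]
    cases ε j <;> simp [apply_eq_neg_of_transpose_eq_neg hM (σ (pairFst (π j)))]
  rw [matchingTerm, prod_congr rfl fun j _ => hfactor j, prod_smul,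
    prod_comp π fun j => M (σ (pairFst j)) (σ (pairSnd j)), map_mul, sign_pairPerm, smul_smul,
    mul_assoc, Int.units_mul_self, mul_one, matchingTerm]

end CommRing

def pairMin (τ : Perm (Fin (2 * n))) (j : Fin n) : Fin (2 * n) :=
  min (τ (pairFst j)) (τ (pairSnd j))

def pairMax (τ : Perm (Fin (2 * n))) (j : Fin n) : Fin (2 * n) :=
  max (τ (pairFst j)) (τ (pairSnd j))

def pairFlip (τ : Perm (Fin (2 * n))) (j : Fin n) : Bool :=
  decide (τ (pairSnd j) < τ (pairFst j))

def pairOrder (τ : Perm (Fin (2 * n))) : Perm (Fin n) :=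
  (Tuple.sort (pairMin τ))⁻¹

/-- The representative in `pfMatchings n` of the coset `τ * H`, where `H` is the hyperoctahedral
group of the `pairPerm`s. -/
def canonical (τ : Perm (Fin (2 * n))) : Perm (Fin (2 * n)) :=
  τ * (pairPerm (pairFlip τ) (pairOrder τ))⁻¹

lemma pairOf_symm_pairMin (τ : Perm (Fin (2 * n))) (j : Fin n) :
    pairOf (τ.symm (pairMin τ j)) = j := by
  rcases min_choice (τ (pairFst j)) (τ (pairSnd j)) with h | h <;> simp [pairMin, h]

lemma pairMin_injective (τ : Perm (Fin (2 * n))) : Function.Injective (pairMin τ) := by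
  intro j l h
  rw [← pairOf_symm_pairMin τ j, h, pairOf_symm_pairMin]

lemma canonical_pairFst (τ : Perm (Fin (2 * n))) (j : Fin n) :
    canonical τ (pairFst j) = pairMin τ (Tuple.sort (pairMin τ) j) := by
  rw [canonical, Perm.mul_apply, pairPerm_inv, pairPerm_pairFst, pairOrder, inv_inv]
  simp only [pairFlip, pairMin, decide_eq_true_eq]
  split_ifs with h
  · exact (min_eq_right h.le).symm
  · exact (min_eq_left (not_lt.mp h)).symm

lemma canonical_pairSnd (τ : Perm (Fin (2 * n))) (j : Fin n) :
    canonical τ (pairSnd j) = pairMax τ (Tuple.sort (pairMin τ) j) := by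
  rw [canonical, Perm.mul_apply, pairPerm_inv, pairPerm_pairSnd, pairOrder, inv_inv]
  simp only [pairFlip, pairMax, decide_eq_true_eq]
  split_ifs with h
  · exact (max_eq_left h.le).symm
  · exact (max_eq_right (not_lt.mp h)).symm

lemma canonical_mem_pfMatchings (τ : Perm (Fin (2 * n))) : canonical τ ∈ pfMatchings n := by
  refine mem_pfMatchings_s16.mpr ⟨fun j => ?_, fun j k hjk => ?_⟩
  · rw [canonical_pairFst, canonical_pairSnd]
    exact min_lt_max.mpr fun h => pairFst_ne_pairSnd _ _ (τ.injective h)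
  · rw [canonical_pairFst, canonical_pairFst]
    exact (Tuple.monotone_sort _).strictMono_of_injective
      ((pairMin_injective τ).comp (Equiv.injective _)) hjk

section Recovery

variable {σ : Perm (Fin (2 * n))} {ε : Fin n → Bool} {π : Perm (Fin n)}

lemma pairMin_mul_pairPerm (hσ : σ ∈ pfMatchings n) (j : Fin n) :
    pairMin (σ * pairPerm ε π) j = σ (pairFst (π j)) := by
  have := (mem_pfMatchings_s16.mp hσ).1 (π j)
  cases h : ε j <;> simp [pairMin, pairPerm_pairFst, pairPerm_pairSnd, h, this.le]

lemma pairFlip_mul_pairPerm (hσ : σ ∈ pfMatchings n) : pairFlip (σ * pairPerm ε π) = ε := by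
  funext j
  have := (mem_pfMatchings_s16.mp hσ).1 (π j)
  cases h : ε j <;> simp [pairFlip, pairPerm_pairFst, pairPerm_pairSnd, h, this, this.le]

lemma pairOrder_mul_pairPerm (hσ : σ ∈ pfMatchings n) : pairOrder (σ * pairPerm ε π) = π := by
  have hmono : StrictMono (pairMin (σ * pairPerm ε π) ∘ ⇑π⁻¹) := fun j k hjk => by
    simpa [pairMin_mul_pairPerm hσ] using (mem_pfMatchings_s16.mp hσ).2 j k hjk
  rw [pairOrder, inv_eq_iff_eq_inv, eq_comm, Tuple.eq_sort_iff]
  exact ⟨hmono.monotone, fun j k hjk _ => absurd (hmono hjk) (by simp_all)⟩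

lemma canonical_mul_pairPerm (hσ : σ ∈ pfMatchings n) : canonical (σ * pairPerm ε π) = σ := by
  rw [canonical, pairFlip_mul_pairPerm hσ, pairOrder_mul_pairPerm hσ, mul_inv_cancel_right]

end Recovery

section CommRing

variable {R : Type*} [CommRing R]

theorem sum_univ_matchingTerm {M : Matrix (Fin (2 * n)) (Fin (2 * n)) R} (hM : Mᵀ = -M) :
    ∑ τ, matchingTerm M τ = (2 ^ n * n.factorial) • pfaffian M := by
  have hcoset : ∑ p ∈ pfMatchings n ×ˢ (univ : Finset ((Fin n → Bool) × Perm (Fin n))),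
      matchingTerm M (p.1 * pairPerm p.2.1 p.2.2) = ∑ τ, matchingTerm M τ :=
    sum_nbij' (fun p => p.1 * pairPerm p.2.1 p.2.2)
      (fun τ => (canonical τ, pairFlip τ, pairOrder τ)) (by simp)
      (fun τ _ => by simp [canonical_mem_pfMatchings])
      (fun p hp => by
        have hσ := (mem_product.mp hp).1
        simp [canonical_mul_pairPerm hσ, pairFlip_mul_pairPerm hσ, pairOrder_mul_pairPerm hσ])
      (fun τ _ => by simp [canonical]) (fun _ _ => rfl)
  have hcard : Fintype.card ((Fin n → Bool) × Perm (Fin n)) = 2 ^ n * n.factorial := by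
    simp [Fintype.card_perm]
  rw [← hcoset, sum_product, pfaffian_eq_sum_matchingTerm, smul_sum]
  simp [matchingTerm_mul_pairPerm hM, hcard]

theorem pfaffian_eq_zero_of_swap_invariant [IsAddTorsionFree R]
    {M : Matrix (Fin (2 * n)) (Fin (2 * n)) R} (hM : Mᵀ = -M) {i k : Fin (2 * n)} (hik : i ≠ k)
    (hswap : ∀ a b, M (swap i k a) (swap i k b) = M a b) :
    pfaffian M = 0 := by
  have hneg : ∀ τ, matchingTerm M (swap i k * τ) = -matchingTerm M τ := fun τ => by
    simp [matchingTerm, hswap, Perm.sign_swap hik]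
  have hsum : ∑ τ, matchingTerm M τ = 0 := by
    rw [← self_eq_neg]
    calc ∑ τ, matchingTerm M τ = ∑ τ, matchingTerm M (swap i k * τ) :=
          (Fintype.sum_equiv (Equiv.mulLeft (swap i k)) _ _ fun _ => rfl).symm
      _ = -∑ τ, matchingTerm M τ := by simp [hneg]
  rw [sum_univ_matchingTerm hM, nsmul_eq_zero_iff_right (by positivity)] at hsum
  exact hsum

end CommRing

section ReplaceRowCol

variable {ι R : Type*} [DecidableEq ι] [CommRing R]

def replaceRowCol (A : Matrix ι ι R) (k : ι) (v : ι → R) : Matrix ι ι R :=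
  Matrix.of fun a b => if a = k then (if b = k then 0 else v b) else if b = k then -v a else A a b

lemma replaceRowCol_apply (A : Matrix ι ι R) (k : ι) (v : ι → R) (a b : ι) :
    replaceRowCol A k v a b =
      if a = k then (if b = k then 0 else v b) else if b = k then -v a else A a b :=
  rfl

variable {A : Matrix ι ι R}

lemma transpose_replaceRowCol (hA : Aᵀ = -A) (k : ι) (v : ι → R) :
    (replaceRowCol A k v)ᵀ = -replaceRowCol A k v := by
  ext a b
  by_cases hak : a = k <;> by_cases hbk : b = k <;>
    simp [replaceRowCol_apply, hak, hbk, apply_eq_neg_of_transpose_eq_neg hA b a]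

lemma replaceRowCol_row_self [IsAddTorsionFree R] (hA : Aᵀ = -A) (k : ι) :
    replaceRowCol A k (A k) = A := by
  ext a b
  by_cases hak : a = k <;> by_cases hbk : b = k <;>
    simp [replaceRowCol_apply, hak, hbk, diag_eq_zero_of_transpose_eq_neg hA,
      apply_eq_neg_of_transpose_eq_neg hA k a]

lemma replaceRowCol_row_apply [IsAddTorsionFree R] (hA : Aᵀ = -A) (i k a b : ι) :
    replaceRowCol A k (A i) a b = A (if a = k then i else a) (if b = k then i else b) := by
  by_cases hak : a = k <;> by_cases hbk : b = k <;>
    simp [replaceRowCol_apply, hak, hbk, diag_eq_zero_of_transpose_eq_neg hA,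
      apply_eq_neg_of_transpose_eq_neg hA i a]

lemma replaceRowCol_row_swap [IsAddTorsionFree R] (hA : Aᵀ = -A) {i k : ι} (hik : i ≠ k)
    (a b : ι) :
    replaceRowCol A k (A i) (swap i k a) (swap i k b) = replaceRowCol A k (A i) a b := by
  have hidx : ∀ x, (if swap i k x = k then i else swap i k x) = if x = k then i else x := by
    intro x
    rcases eq_or_ne x i with rfl | hxi
    · simp [hik]
    rcases eq_or_ne x k with rfl | hxk
    · simp
    · simp [swap_apply_of_ne_of_ne hxi hxk, hxk]
  simp only [replaceRowCol_row_apply hA, hidx]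

end ReplaceRowCol

def pairAt (σ : Perm (Fin (2 * n))) (k : Fin (2 * n)) : Fin n :=
  pairOf (σ.symm k)

@[simp] lemma pairAt_apply_pairFst (σ : Perm (Fin (2 * n))) (j : Fin n) :
    pairAt σ (σ (pairFst j)) = j := by
  simp [pairAt]

@[simp] lemma pairAt_apply_pairSnd (σ : Perm (Fin (2 * n))) (j : Fin n) :
    pairAt σ (σ (pairSnd j)) = j := by
  simp [pairAt]

lemma apply_pairFst_pairAt_or (σ : Perm (Fin (2 * n))) (k : Fin (2 * n)) :
    σ (pairFst (pairAt σ k)) = k ∨ σ (pairSnd (pairAt σ k)) = k := by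
  rcases eq_pairFst_or_eq_pairSnd (σ.symm k) with h | h
  · exact .inl (σ.symm_apply_eq.mp h).symm
  · exact .inr (σ.symm_apply_eq.mp h).symm

lemma apply_pair_ne_of_ne_pairAt {σ : Perm (Fin (2 * n))} {k : Fin (2 * n)} {l : Fin n}
    (hl : l ≠ pairAt σ k) : σ (pairFst l) ≠ k ∧ σ (pairSnd l) ≠ k := by
  constructor <;> rintro rfl <;> simp at hl

section CommRing

variable {R : Type*} [CommRing R]

/-- The entry of `replaceRowCol _ k v` on the pair of `σ` through `k`. -/
def rowFactor (σ : Perm (Fin (2 * n))) (k : Fin (2 * n)) (v : Fin (2 * n) → R) : R :=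
  if σ (pairFst (pairAt σ k)) = k then v (σ (pairSnd (pairAt σ k)))
  else -v (σ (pairFst (pairAt σ k)))

lemma rowFactor_eq_sum (σ : Perm (Fin (2 * n))) (k : Fin (2 * n)) (v : Fin (2 * n) → R) :
    rowFactor σ k v = ∑ b, v b * rowFactor σ k (Pi.single b 1) := by
  unfold rowFactor
  split_ifs <;> simp [Pi.single_apply]

lemma prod_replaceRowCol (A : Matrix (Fin (2 * n)) (Fin (2 * n)) R) (k : Fin (2 * n))
    (v : Fin (2 * n) → R) (σ : Perm (Fin (2 * n))) :
    ∏ j, replaceRowCol A k v (σ (pairFst j)) (σ (pairSnd j)) =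
      rowFactor σ k v * ∏ l ∈ univ.erase (pairAt σ k), A (σ (pairFst l)) (σ (pairSnd l)) := by
  rw [← mul_prod_erase univ _ (mem_univ (pairAt σ k))]
  congr 1
  · have hne : σ (pairFst (pairAt σ k)) ≠ σ (pairSnd (pairAt σ k)) :=
      σ.injective.ne (pairFst_ne_pairSnd _ _)
    rcases apply_pairFst_pairAt_or σ k with h | h
    · have hsnd : σ (pairSnd (pairAt σ k)) ≠ k := fun h' => hne (h.trans h'.symm)
      rw [rowFactor, if_pos h, replaceRowCol_apply, if_pos h, if_neg hsnd]
    · have hfst : σ (pairFst (pairAt σ k)) ≠ k := fun h' => hne (h'.trans h.symm)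
      rw [rowFactor, if_neg hfst, replaceRowCol_apply, if_neg hfst, if_pos h]
  · refine prod_congr rfl fun l hl => ?_
    obtain ⟨h₁, h₂⟩ := apply_pair_ne_of_ne_pairAt (ne_of_mem_erase hl)
    simp [replaceRowCol_apply, h₁, h₂]

lemma pfaffian_replaceRowCol (A : Matrix (Fin (2 * n)) (Fin (2 * n)) R) (k : Fin (2 * n))
    (v : Fin (2 * n) → R) :
    pfaffian (replaceRowCol A k v) = ∑ σ ∈ pfMatchings n, Perm.sign σ •
      (rowFactor σ k v * ∏ l ∈ univ.erase (pairAt σ k), A (σ (pairFst l)) (σ (pairSnd l))) := by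
  simp only [pfaffian_eq_sum_matchingTerm, matchingTerm, prod_replaceRowCol]

def pfaffianAdjugate (A : Matrix (Fin (2 * n)) (Fin (2 * n)) R) :
    Matrix (Fin (2 * n)) (Fin (2 * n)) R :=
  Matrix.of fun b k => pfaffian (replaceRowCol A k (Pi.single b 1))

lemma pfaffian_replaceRowCol_eq_vecMul (A : Matrix (Fin (2 * n)) (Fin (2 * n)) R)
    (k : Fin (2 * n)) (v : Fin (2 * n) → R) :
    pfaffian (replaceRowCol A k v) = (v ᵥ* pfaffianAdjugate A) k := by
  simp only [vecMul, dotProduct, pfaffianAdjugate, of_apply, pfaffian_replaceRowCol, mul_sum,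
    mul_smul_comm, ← mul_assoc]
  rw [sum_comm]
  refine sum_congr rfl fun σ _ => ?_
  rw [rowFactor_eq_sum, sum_mul, smul_sum]

theorem mul_pfaffianAdjugate [IsAddTorsionFree R] {A : Matrix (Fin (2 * n)) (Fin (2 * n)) R}
    (hA : Aᵀ = -A) : A * pfaffianAdjugate A = pfaffian A • 1 := by
  ext i k
  rw [mul_apply_eq_vecMul, ← pfaffian_replaceRowCol_eq_vecMul]
  rcases eq_or_ne i k with rfl | hik
  · simp [replaceRowCol_row_self hA]
  · simp only [Matrix.smul_apply, one_apply_ne hik, smul_zero]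
    exact pfaffian_eq_zero_of_swap_invariant (transpose_replaceRowCol hA k (A i)) hik
      (replaceRowCol_row_swap hA hik)

def pfaffianDeriv (A C : Matrix (Fin (2 * n)) (Fin (2 * n)) R) : R :=
  ∑ σ ∈ pfMatchings n, Perm.sign σ • ∑ j,
    (∏ l ∈ univ.erase j, A (σ (pairFst l)) (σ (pairSnd l))) * C (σ (pairFst j)) (σ (pairSnd j))

/-- Each pair of `σ` is met twice, once from each of its two ends. -/
lemma sum_rowFactor_mul_prod {C : Matrix (Fin (2 * n)) (Fin (2 * n)) R} (hC : Cᵀ = -C)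
    (A : Matrix (Fin (2 * n)) (Fin (2 * n)) R) (σ : Perm (Fin (2 * n))) :
    ∑ k, rowFactor σ k (C k) * ∏ l ∈ univ.erase (pairAt σ k), A (σ (pairFst l)) (σ (pairSnd l)) =
      2 * ∑ j, (∏ l ∈ univ.erase j, A (σ (pairFst l)) (σ (pairSnd l))) *
        C (σ (pairFst j)) (σ (pairSnd j)) := by
  rw [← Equiv.sum_comp σ, sum_univ_eq_sum_pairs, mul_sum]
  refine sum_congr rfl fun j _ => ?_
  have hne : σ (pairFst j) ≠ σ (pairSnd j) := σ.injective.ne (pairFst_ne_pairSnd _ _)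
  rw [rowFactor, rowFactor, pairAt_apply_pairFst, pairAt_apply_pairSnd, if_pos rfl, if_neg hne,
    apply_eq_neg_of_transpose_eq_neg hC (σ (pairFst j)) (σ (pairSnd j)), neg_neg]
  ring

theorem trace_pfaffianAdjugate_mul {C : Matrix (Fin (2 * n)) (Fin (2 * n)) R} (hC : Cᵀ = -C)
    (A : Matrix (Fin (2 * n)) (Fin (2 * n)) R) :
    trace (pfaffianAdjugate A * C) = 2 * pfaffianDeriv A C := by
  calc trace (pfaffianAdjugate A * C) = ∑ k, pfaffian (replaceRowCol A k (C k)) := by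
        rw [trace_mul_comm]
        simp [trace, mul_apply_eq_vecMul, pfaffian_replaceRowCol_eq_vecMul]
    _ = 2 * pfaffianDeriv A C := by
        simp only [pfaffian_replaceRowCol, pfaffianDeriv, mul_sum]
        rw [sum_comm]
        refine sum_congr rfl fun σ _ => ?_
        rw [← smul_sum, sum_rowFactor_mul_prod hC, mul_smul_comm]

theorem two_mul_pfaffianDeriv [IsAddTorsionFree R] {A C : Matrix (Fin (2 * n)) (Fin (2 * n)) R}
    (hA : Aᵀ = -A) (hC : Cᵀ = -C) (hdet : IsUnit A.det) :
    2 * pfaffianDeriv A C = pfaffian A * trace (A⁻¹ * C) := by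
  have hadj : pfaffianAdjugate A = pfaffian A • A⁻¹ := by
    calc pfaffianAdjugate A = A⁻¹ * (A * pfaffianAdjugate A) := by
          rw [← Matrix.mul_assoc, nonsing_inv_mul A hdet, Matrix.one_mul]
      _ = pfaffian A • A⁻¹ := by rw [mul_pfaffianAdjugate hA, Matrix.mul_smul, Matrix.mul_one]
  rw [← trace_pfaffianAdjugate_mul hC, hadj, Matrix.smul_mul, trace_smul, smul_eq_mul]

end CommRing

theorem hasDerivAt_pfaffian_add_smul {𝕜 : Type*} [NontriviallyNormedField 𝕜]
    (A C : Matrix (Fin (2 * n)) (Fin (2 * n)) 𝕜) :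
    HasDerivAt (fun z : 𝕜 => pfaffian (A + z • C)) (pfaffianDeriv A C) 0 := by
  simp only [pfaffian_eq_sum_matchingTerm, matchingTerm, pfaffianDeriv, Units.smul_def,
    zsmul_eq_mul, Matrix.add_apply, Matrix.smul_apply, smul_eq_mul]
  refine HasDerivAt.fun_sum fun σ _ => ?_
  have hprod := HasDerivAt.fun_finsetProd (u := univ) (x := (0 : 𝕜))
    fun j _ => ((hasDerivAt_id 0).mul_const (C (σ (pairFst j)) (σ (pairSnd j)))).const_add
      (A (σ (pairFst j)) (σ (pairSnd j)))
  simpa using hprod.const_mul ((Perm.sign σ : ℤ) : 𝕜)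

end Pfaffian

/-- For antisymmetric `A, C` with `A` invertible, the derivative at `z = 0` of
`z ↦ pf(A + z·C)` equals `(1/2)·pf(A)·tr(A⁻¹·C)`. -/
theorem deriv_pfaffian_at_zero (r : ℕ) (A C : Matrix (Fin (2 * r)) (Fin (2 * r)) ℝ)
    (hA : Aᵀ = -A) (hC : Cᵀ = -C) (hAinv : IsUnit A.det) :
    deriv (fun z : ℝ => pfaffian (A + z • C)) 0
      = (1 / 2) * pfaffian A * Matrix.trace (A⁻¹ * C) := by
  rw [(Pfaffian.hasDerivAt_pfaffian_add_smul A C).deriv, mul_assoc,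
    ← Pfaffian.two_mul_pfaffianDeriv hA hC hAinv]
  ring
end

section
/- Let Q be a uniformly random 2n × 2n signed permutation matrix (uniform over the group B(2n) of matrices with exactly one nonzero entry ±1 in each row and column). Then for any 1 ≤ k ≤ 2n and any subsets S₁, S₂, T₁, T₂ ⊆ {1,…,2n} with |S₁| = |S₂| = |T₁| = |T₂| = k, the expectation E[det(Q|_{S₁,T₁}) · det(Q|_{S₂,T₂})] equals C(2n, k)⁻¹ if S₁ = S₂ and T₁ = T₂, and equals 0 otherwise. -/
open Matrix

/-- The signed permutation matrix determined by a permutation `σ` and a choice of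
signs `s` (entry `(i,j)` is `±1` if `i = σ(j)`, else `0`); as `(σ, s)` ranges over all
`(2n)!·2^{2n}` parameters this enumerates the group `B(2n)` of signed permutation
matrices exactly once. -/
def spMatrix {n : ℕ} (σ : Equiv.Perm (Fin (2 * n))) (s : Fin (2 * n) → Bool) :
    Matrix (Fin (2 * n)) (Fin (2 * n)) ℝ :=
  Matrix.of fun i j => if σ j = i then (if s j then 1 else -1) else 0

open Finset
open scoped Pointwise Nat

/-! Write `Q = P D`, with `P` the permutation matrix of `σ` and `D` the diagonal matrix of
signs. Then `det Q|_{S,T}` is `det P|_{S,T}` times the product of the signs over `T`, and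
averaging over the signs kills the product of two minors unless `T₁ = T₂`, by orthogonality of
the sign characters of distinct subsets. A minor `P|_{S,T}` vanishes unless `σ` maps `T` onto
`S`, and is then itself a permutation matrix, of determinant `±1`; so with `T₁ = T₂` only
`S₁ = S₂` survives, and what remains is the number of permutations mapping `T` onto `S`. Since
the permutations act transitively on `k`-subsets, orbit–stabilizer makes that number
`(2n)! / C(2n, k)`. -/

theorem MulAction.natCard_smul_eq_mul_natCard_eq_natCard_group {G X : Type*} [Group G]
    [MulAction G X] [MulAction.IsPretransitive G X] (x y : X) :
    Nat.card {g : G // g • x = y} * Nat.card X = Nat.card G := by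
  obtain ⟨τ, rfl⟩ := MulAction.exists_smul_eq G x y
  have : {g : G // g • x = τ • x} ≃ MulAction.stabilizer G x :=
    (Equiv.mulLeft τ⁻¹).subtypeEquiv fun g => by
      simp [MulAction.mem_stabilizer_iff, mul_smul, inv_smul_eq_iff]
  rw [Nat.card_congr this, ← MulAction.index_stabilizer_of_transitive G x,
    Subgroup.card_mul_index]

theorem Equiv.Perm.card_smul_finset_eq_mul_choose_eq_factorial {α : Type*} [Fintype α]
    [DecidableEq α] {k : ℕ} {S T : Finset α} (hS : S.card = k) (hT : T.card = k) :
    #{σ : Equiv.Perm α | σ • T = S} * (Fintype.card α).choose k = (Fintype.card α)! := by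
  have := Set.powersetCard.isPretransitive (α := α) (n := k)
  have h := MulAction.natCard_smul_eq_mul_natCard_eq_natCard_group (G := Equiv.Perm α)
    (⟨T, hT⟩ : Set.powersetCard α k) ⟨S, hS⟩
  rw [Set.powersetCard.card, Nat.card_perm] at h
  simp only [Nat.card_eq_fintype_card, ← Subtype.coe_inj, Set.powersetCard.coe_smul] at h
  rwa [Fintype.card_subtype] at h

theorem Equiv.Perm.smul_finset_eq_iff_forall_inv_mem {α : Type*} [DecidableEq α]
    (σ : Equiv.Perm α) {S T : Finset α} (hST : S.card = T.card) :
    σ • T = S ↔ ∀ x ∈ S, σ⁻¹ x ∈ T := by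
  refine ⟨fun h x hx => Finset.inv_smul_mem_iff.2 (h ▸ hx), fun h => ?_⟩
  refine (Finset.eq_of_subset_of_card_le (fun x hx => Finset.inv_smul_mem_iff.1 (h x hx)) ?_).symm
  rw [Finset.card_smul_finset, hST]

theorem sum_prod_sign_mul_prod_sign {α R : Type*} [Fintype α] [DecidableEq α] [CommRing R]
    (T₁ T₂ : Finset α) :
    ∑ s : α → Bool,
        (∏ t ∈ T₁, if s t then (1 : R) else -1) * (∏ t ∈ T₂, if s t then (1 : R) else -1)
      = if T₁ = T₂ then 2 ^ Fintype.card α else 0 := by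
  set χ : α → Bool → R := fun t b =>
    (if t ∈ T₁ then (if b then 1 else -1) else 1) * (if t ∈ T₂ then (if b then 1 else -1) else 1)
    with hχ
  have coordinate (t : α) : ∑ b, χ t b = if (t ∈ T₁ ↔ t ∈ T₂) then 2 else 0 := by
    by_cases h₁ : t ∈ T₁ <;> by_cases h₂ : t ∈ T₂ <;> simp [hχ, h₁, h₂, one_add_one_eq_two]
  calc _ = ∑ s : α → Bool, ∏ t, χ t (s t) := by
        simp only [hχ, Finset.prod_mul_distrib, Fintype.prod_ite_mem]
    _ = ∏ t, ∑ b, χ t b := (Fintype.prod_sum χ).symm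
    _ = ∏ t, if (t ∈ T₁ ↔ t ∈ T₂) then (2 : R) else 0 := by simp only [coordinate]
    _ = _ := by
        rw [Finset.prod_ite_zero]
        simp [Finset.ext_iff]

namespace Matrix

variable {κ α R : Type*} [Fintype κ] [DecidableEq κ] [DecidableEq α] [CommRing R]

theorem det_submatrix_mul_diagonal [Fintype α] (A : Matrix α α R) (d : α → R) (f g : κ → α) :
    det ((A * diagonal d).submatrix f g) = det (A.submatrix f g) * ∏ j, d (g j) := by
  have : (A * diagonal d).submatrix f g = A.submatrix f g * diagonal (d ∘ g) := by
    ext i j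
    simp
  rw [this, det_mul, det_diagonal, Function.comp_def]

theorem det_permMatrix_submatrix_eq_zero (τ : Equiv.Perm α) (f g : κ → α) (i : κ)
    (h : τ (f i) ∉ Set.range g) : det ((τ.permMatrix R).submatrix f g) = 0 :=
  det_eq_zero_of_row_eq_zero i fun j => by
    have hj : τ (f i) ≠ g j := fun e => h ⟨j, e.symm⟩
    simp [PEquiv.toMatrix_apply, hj]

theorem exists_permMatrix_submatrix_eq (τ : Equiv.Perm α) {f g : κ → α}
    (hf : Function.Injective f) (hg : Function.Injective g) (h : ∀ i, τ (f i) ∈ Set.range g) :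
    ∃ π : Equiv.Perm κ, (τ.permMatrix R).submatrix f g = π.permMatrix R := by
  choose π hπ using h
  have hinj : Function.Injective π := fun i i' e => hf (τ.injective (by rw [← hπ, ← hπ, e]))
  refine ⟨Equiv.ofBijective π (Finite.injective_iff_bijective.1 hinj), ?_⟩
  ext i j
  simp [PEquiv.toMatrix_apply, ← hπ, hg.eq_iff]

end Matrix

section Minors

variable {α R : Type*} [LinearOrder α] [CommRing R] {k : ℕ}

theorem det_permMatrix_inv_submatrix_mul_det_submatrix (σ : Equiv.Perm α) {S₁ S₂ T : Finset α}
    (h₁ : S₁.card = k) (h₂ : S₂.card = k) (hT : T.card = k) :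
    det ((σ⁻¹.permMatrix R).submatrix (S₁.orderEmbOfFin h₁) (T.orderEmbOfFin hT)) *
        det ((σ⁻¹.permMatrix R).submatrix (S₂.orderEmbOfFin h₂) (T.orderEmbOfFin hT))
      = if S₁ = S₂ ∧ σ • T = S₁ then 1 else 0 := by
  have hzero {S : Finset α} (hS : S.card = k) (hne : σ • T ≠ S) :
      det ((σ⁻¹.permMatrix R).submatrix (S.orderEmbOfFin hS) (T.orderEmbOfFin hT)) = 0 := by
    rw [Ne, σ.smul_finset_eq_iff_forall_inv_mem (hS.trans hT.symm)] at hne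
    push Not at hne
    obtain ⟨x, hxS, hxT⟩ := hne
    obtain ⟨i, rfl⟩ : x ∈ Set.range (S.orderEmbOfFin hS) := by rwa [Finset.range_orderEmbOfFin]
    exact det_permMatrix_submatrix_eq_zero _ _ _ i (by rwa [Finset.range_orderEmbOfFin])
  by_cases hS : S₁ = S₂
  · subst hS
    by_cases hσ : σ • T = S₁
    · have hmem := (σ.smul_finset_eq_iff_forall_inv_mem (h₁.trans hT.symm)).1 hσ
      obtain ⟨π, hπ⟩ := exists_permMatrix_submatrix_eq (R := R) σ⁻¹ (S₁.orderEmbOfFin h₁).injective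
        (T.orderEmbOfFin hT).injective fun i => by
          rw [Finset.range_orderEmbOfFin]
          exact hmem _ (Finset.orderEmbOfFin_mem _ _ _)
      rw [hπ, det_permutation, if_pos ⟨rfl, hσ⟩, ← Int.cast_mul, ← Units.val_mul,
        Int.units_mul_self, Units.val_one, Int.cast_one]
    · rw [hzero h₁ hσ, zero_mul, if_neg fun h => hσ h.2]
  · rw [if_neg fun h => hS h.1]
    by_cases hσ : σ • T = S₁
    · rw [hzero h₂ (hσ ▸ hS), mul_zero]
    · rw [hzero h₁ hσ, zero_mul]

theorem sum_det_submatrix_mul_det_submatrix [Fintype α] (σ : Equiv.Perm α)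
    {S₁ S₂ T₁ T₂ : Finset α} (hS₁ : S₁.card = k) (hS₂ : S₂.card = k) (hT₁ : T₁.card = k)
    (hT₂ : T₂.card = k) :
    ∑ s : α → Bool,
        det ((σ⁻¹.permMatrix R * diagonal fun j => if s j then 1 else -1).submatrix
            (S₁.orderEmbOfFin hS₁) (T₁.orderEmbOfFin hT₁)) *
          det ((σ⁻¹.permMatrix R * diagonal fun j => if s j then 1 else -1).submatrix
            (S₂.orderEmbOfFin hS₂) (T₂.orderEmbOfFin hT₂))
      = if S₁ = S₂ ∧ T₁ = T₂ ∧ σ • T₁ = S₁ then 2 ^ Fintype.card α else 0 := by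
  have hcol {T : Finset α} (hT : T.card = k) (s : α → Bool) :
      ∏ j, (if s (T.orderEmbOfFin hT j) then (1 : R) else -1) = ∏ t ∈ T, if s t then 1 else -1 := by
    conv_rhs => rw [← Finset.map_orderEmbOfFin_univ T hT, Finset.prod_map]
    rfl
  simp only [det_submatrix_mul_diagonal, hcol, mul_mul_mul_comm _ (∏ t ∈ T₁, _), ← Finset.mul_sum,
    sum_prod_sign_mul_prod_sign]
  by_cases hT : T₁ = T₂
  · subst hT
    rw [det_permMatrix_inv_submatrix_mul_det_submatrix]
    by_cases hS : S₁ = S₂ <;> by_cases hσ : σ • T₁ = S₁ <;> simp [hS, hσ]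
  · simp [hT]

end Minors

theorem spMatrix_eq_permMatrix_mul_diagonal {n : ℕ} (σ : Equiv.Perm (Fin (2 * n)))
    (s : Fin (2 * n) → Bool) :
    spMatrix σ s = σ⁻¹.permMatrix ℝ * diagonal fun j => if s j then 1 else -1 := by
  ext i j
  simp only [spMatrix, of_apply, mul_diagonal, Equiv.Perm.permMatrix, PEquiv.toMatrix_apply,
    Equiv.toPEquiv_apply, Option.mem_some_iff, Equiv.Perm.inv_eq_iff_eq, ite_mul, one_mul, zero_mul]
  exact if_congr eq_comm rfl rfl

theorem expectation_minor_products_signedPerm_general (n k : ℕ)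
    (S₁ S₂ T₁ T₂ : Finset (Fin (2 * n)))
    (hS₁ : S₁.card = k) (hS₂ : S₂.card = k) (hT₁ : T₁.card = k) (hT₂ : T₂.card = k) :
    (1 / ((2 ^ (2 * n) * (2 * n).factorial : ℕ) : ℝ)) *
        ∑ σ : Equiv.Perm (Fin (2 * n)), ∑ s : Fin (2 * n) → Bool,
          (Matrix.det (Matrix.of fun i j : Fin k =>
              spMatrix σ s ((S₁.orderIsoOfFin hS₁ i : Fin (2 * n)))
                ((T₁.orderIsoOfFin hT₁ j : Fin (2 * n)))) *
            Matrix.det (Matrix.of fun i j : Fin k =>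
              spMatrix σ s ((S₂.orderIsoOfFin hS₂ i : Fin (2 * n)))
                ((T₂.orderIsoOfFin hT₂ j : Fin (2 * n)))))
      = if S₁ = S₂ ∧ T₁ = T₂ then (((2 * n).choose k : ℕ) : ℝ)⁻¹ else 0 := by
  have hminor (σ s) {S T : Finset (Fin (2 * n))} (hS : S.card = k) (hT : T.card = k) :
      det (Matrix.of fun i j : Fin k =>
          spMatrix σ s (S.orderIsoOfFin hS i : Fin (2 * n)) (T.orderIsoOfFin hT j : Fin (2 * n)))
        = det ((σ⁻¹.permMatrix ℝ * diagonal fun j => if s j then 1 else -1).submatrix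
            (S.orderEmbOfFin hS) (T.orderEmbOfFin hT)) := by
    rw [← spMatrix_eq_permMatrix_mul_diagonal]
    rfl
  simp only [hminor, sum_det_submatrix_mul_det_submatrix, Fintype.card_fin]
  split_ifs with h
  · obtain ⟨rfl, rfl⟩ := h
    have hcount : (#{σ : Equiv.Perm (Fin (2 * n)) | σ • T₁ = S₁} : ℝ) * (2 * n).choose k
        = (2 * n)! := by
      exact_mod_cast Fintype.card_fin (2 * n) ▸
        Equiv.Perm.card_smul_finset_eq_mul_choose_eq_factorial hS₁ hT₁
    have hchoose : ((2 * n).choose k : ℝ) ≠ 0 := fun h0 =>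
      (2 * n).factorial_ne_zero (by rw [h0, mul_zero] at hcount; exact_mod_cast hcount.symm)
    simp only [true_and, Finset.sum_ite, Finset.sum_const_zero, add_zero, Finset.sum_const,
      nsmul_eq_mul]
    field_simp
    push_cast
    rw [← hcount]
    ring
  · rw [Finset.sum_eq_zero fun σ _ => if_neg fun h' => h ⟨h'.1, h'.2.1⟩, mul_zero]

/-- For a uniformly random signed permutation matrix `Q ∈ B(2n)` and `k`-element
subsets `S₁, S₂, T₁, T₂`, the expectation `E[det(Q|_{S₁,T₁})·det(Q|_{S₂,T₂})]` equals
`C(2n,k)⁻¹` if `S₁ = S₂` and `T₁ = T₂`, and `0` otherwise. -/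
theorem expectation_minor_products_signedPerm (n k : ℕ) (hk1 : 1 ≤ k) (hk2 : k ≤ 2 * n)
    (S₁ S₂ T₁ T₂ : Finset (Fin (2 * n)))
    (hS₁ : S₁.card = k) (hS₂ : S₂.card = k) (hT₁ : T₁.card = k) (hT₂ : T₂.card = k) :
    (1 / ((2 ^ (2 * n) * (2 * n).factorial : ℕ) : ℝ)) *
        ∑ σ : Equiv.Perm (Fin (2 * n)), ∑ s : Fin (2 * n) → Bool,
          (Matrix.det (Matrix.of fun i j : Fin k =>
              spMatrix σ s ((S₁.orderIsoOfFin hS₁ i : Fin (2 * n)))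
                ((T₁.orderIsoOfFin hT₁ j : Fin (2 * n)))) *
            Matrix.det (Matrix.of fun i j : Fin k =>
              spMatrix σ s ((S₂.orderIsoOfFin hS₂ i : Fin (2 * n)))
                ((T₂.orderIsoOfFin hT₂ j : Fin (2 * n)))))
      = if S₁ = S₂ ∧ T₁ = T₂ then (((2 * n).choose k : ℕ) : ℝ)⁻¹ else 0 :=
  expectation_minor_products_signedPerm_general n k S₁ S₂ T₁ T₂ hS₁ hS₂ hT₁ hT₂
end
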